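/- arXiv:1807.06715 — 6 statements merged into one kernel-verified Lean document; each statement's English description precedes it below -/
import Mathlib

section
/- Let d be a positive integer, let h : ℤ^d → ℝ be any function, let x ∈ ℝ^d and let r > 0. Then there exists a function h̃ : ℤ^d → ℝ that agrees with h on ℤ^d ∩ B_r(x) and satisfies sup_{z ∈ ℤ^d} max_{1 ≤ i ≤ d} |h̃(z + e^{(i)}) − h̃(z)| ≤ √d · max_{z ∈ ℤ^d ∩ B_{r+√d}(x)} max_{1 ≤ i ≤ d} |h(z + e^{(i)}) − h(z)|. -/
/-!
Let `S` be the set of lattice points in `B_{r+√d}(x)` and `M = ‖Δh‖_{r+√d,∞}`. Two points `a ≠ b`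
of `S` differ in some coordinate `i`, and of the two moves "`a` one step towards `b`" and
"`b` one step towards `a`" along `e⁽ⁱ⁾`, at least one stays in `S`. Inducting on `‖a - b‖₁` gives
`|h a - h b| ≤ M ‖a - b‖₁ ≤ √d M |a - b|`, so `h` is `√d M`-Lipschitz on `S` for the Euclidean
metric. Its McShane extension to `ℝ^d`, restricted to `ℤ^d`, agrees with `h` on
`S ⊇ ℤ^d ∩ B_r(x)` and changes by at most `√d M` along unit steps.
-/

open MeasureTheory

/-- The canonical embedding of `ℤ^d` into Euclidean space `ℝ^d`. -/
def latticeEmbed (d : ℕ) (z : Fin d → ℤ) : EuclideanSpace ℝ (Fin d) :=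
  WithLp.toLp 2 (fun j => (z j : ℝ))

/-- `‖Δh‖_{ρ,∞}`: the supremum of `|h(z + e⁽ⁱ⁾) − h(z)|` over lattice points `z` in the
closed Euclidean ball of radius `ρ` centred at `x` and over coordinates `i`. -/
noncomputable def deltaNorm (d : ℕ) (h : (Fin d → ℤ) → ℝ)
    (x : EuclideanSpace ℝ (Fin d)) (ρ : ℝ) : ℝ :=
  sSup {v : ℝ | ∃ (z : Fin d → ℤ) (i : Fin d),
    dist (latticeEmbed d z) x ≤ ρ ∧ v = |h (z + Pi.single i 1) - h z|}

section

variable {d : ℕ}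

lemma latticeEmbed_apply (z : Fin d → ℤ) (j : Fin d) : latticeEmbed d z j = z j := rfl

lemma latticeEmbed_add_single (z : Fin d → ℤ) (i : Fin d) (s : ℤ) :
    latticeEmbed d (z + Pi.single i s) = latticeEmbed d z + EuclideanSpace.single i (s : ℝ) := by
  ext j
  by_cases hj : j = i
  · subst hj; simp [latticeEmbed_apply]
  · simp [latticeEmbed_apply, hj]

lemma dist_latticeEmbed_add_single_sq (z : Fin d → ℤ) (i : Fin d) (s : ℤ)
    (x : EuclideanSpace ℝ (Fin d)) :
    dist (latticeEmbed d (z + Pi.single i s)) x ^ 2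
      = dist (latticeEmbed d z) x ^ 2 + s * (2 * (z i - x i) + s) := by
  rw [dist_eq_norm, dist_eq_norm, latticeEmbed_add_single, add_sub_right_comm, norm_add_sq_real,
    EuclideanSpace.inner_single_right, PiLp.norm_single]
  simp [latticeEmbed_apply]
  ring

lemma dist_latticeEmbed_add_single_self (z : Fin d → ℤ) (i : Fin d) :
    dist (latticeEmbed d (z + Pi.single i 1)) (latticeEmbed d z) = 1 := by
  simp [latticeEmbed_add_single, dist_eq_norm]

lemma abs_sub_le_dist_latticeEmbed (z : Fin d → ℤ) (x : EuclideanSpace ℝ (Fin d)) (j : Fin d) :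
    |(z j : ℝ) - x j| ≤ dist (latticeEmbed d z) x :=
  PiLp.dist_apply_le (latticeEmbed d z) x j

def latticeBall (x : EuclideanSpace ℝ (Fin d)) (ρ : ℝ) : Set (Fin d → ℤ) :=
  {z | dist (latticeEmbed d z) x ≤ ρ}

lemma finite_latticeBall (x : EuclideanSpace ℝ (Fin d)) (ρ : ℝ) : (latticeBall x ρ).Finite := by
  refine (Set.Finite.pi fun j => Set.finite_Icc ⌈x j - ρ⌉ ⌊x j + ρ⌋).subset fun z hz j _ => ?_
  have hj := abs_le.1 ((abs_sub_le_dist_latticeEmbed z x j).trans hz)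
  exact ⟨Int.ceil_le.2 (by linarith), Int.le_floor.2 (by linarith)⟩

lemma add_single_mem_latticeBall {x : EuclideanSpace ℝ (Fin d)} {ρ : ℝ} {z : Fin d → ℤ}
    (hz : z ∈ latticeBall x ρ) {i : Fin d} {s : ℤ} (hs : s * (2 * (z i - x i) + s) ≤ 0) :
    z + Pi.single i s ∈ latticeBall x ρ := by
  refine le_trans ?_ (show dist (latticeEmbed d z) x ≤ ρ from hz)
  refine (pow_le_pow_iff_left₀ dist_nonneg dist_nonneg two_ne_zero).1 ?_
  rw [dist_latticeEmbed_add_single_sq]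
  linarith

/-- The two increments of the squared distance to `x` add up to `2 - 2 |b i - a i| ≤ 0`. -/
lemma add_single_sign_mem_latticeBall_or {x : EuclideanSpace ℝ (Fin d)} {ρ : ℝ}
    {a b : Fin d → ℤ} (ha : a ∈ latticeBall x ρ) (hb : b ∈ latticeBall x ρ) {i : Fin d}
    (hi : a i ≠ b i) :
    a + Pi.single i (b i - a i).sign ∈ latticeBall x ρ ∨
      b + Pi.single i (a i - b i).sign ∈ latticeBall x ρ := by
  by_contra! hab
  have hA := mt (add_single_mem_latticeBall ha) hab.1
  have hB := mt (add_single_mem_latticeBall hb) hab.2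
  rw [← neg_sub, Int.sign_neg] at hB
  have hne : b i - a i ≠ 0 := sub_ne_zero.2 hi.symm
  have hpos : (1 : ℤ) ≤ (b i - a i).sign * (b i - a i) := by
    rw [Int.sign_mul_self]; exact_mod_cast Int.natAbs_pos.2 hne
  have hsq : (b i - a i).sign * (b i - a i).sign = 1 := by
    rw [← Int.natAbs_mul_self', Int.natAbs_sign_of_ne_zero hne]; rfl
  have hpos' : (1 : ℝ) ≤ (b i - a i).sign * ((b i : ℝ) - a i) := by exact_mod_cast hpos
  have hsq' : ((b i - a i).sign : ℝ) * (b i - a i).sign = 1 := by exact_mod_cast hsq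
  push_cast at hB
  nlinarith

lemma bddAbove_deltaNorm_set (h : (Fin d → ℤ) → ℝ) (x : EuclideanSpace ℝ (Fin d)) (ρ : ℝ) :
    BddAbove {v : ℝ | ∃ (z : Fin d → ℤ) (i : Fin d),
      dist (latticeEmbed d z) x ≤ ρ ∧ v = |h (z + Pi.single i 1) - h z|} := by
  refine (((finite_latticeBall x ρ).prod (Set.finite_univ (α := Fin d))).image
    fun p => |h (p.1 + Pi.single p.2 1) - h p.1|).subset ?_ |>.bddAbove
  rintro v ⟨z, i, hz, rfl⟩
  exact ⟨(z, i), ⟨hz, trivial⟩, rfl⟩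

lemma deltaNorm_nonneg (h : (Fin d → ℤ) → ℝ) (x : EuclideanSpace ℝ (Fin d)) (ρ : ℝ) :
    0 ≤ deltaNorm d h x ρ :=
  Real.sSup_nonneg fun _ ⟨_, _, _, hv⟩ => hv ▸ abs_nonneg _

lemma abs_sub_le_deltaNorm (h : (Fin d → ℤ) → ℝ) {x : EuclideanSpace ℝ (Fin d)} {ρ : ℝ}
    {z : Fin d → ℤ} (hz : z ∈ latticeBall x ρ) (i : Fin d) :
    |h (z + Pi.single i 1) - h z| ≤ deltaNorm d h x ρ :=
  le_csSup (bddAbove_deltaNorm_set h x ρ) ⟨z, i, hz, rfl⟩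

lemma abs_sub_le_deltaNorm_of_add_single (h : (Fin d → ℤ) → ℝ) {x : EuclideanSpace ℝ (Fin d)}
    {ρ : ℝ} {z : Fin d → ℤ} {i : Fin d} {s : ℤ} (hs : s.natAbs = 1)
    (hz : z ∈ latticeBall x ρ) (hz' : z + Pi.single i s ∈ latticeBall x ρ) :
    |h (z + Pi.single i s) - h z| ≤ deltaNorm d h x ρ := by
  rcases Int.natAbs_eq_iff.1 hs with rfl | rfl
  · exact abs_sub_le_deltaNorm h hz i
  · have hzs : z = z + Pi.single i (-1) + Pi.single i 1 := by
      rw [add_assoc, ← Pi.single_add]; simp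
    rw [abs_sub_comm]
    nth_rewrite 1 [hzs]
    exact abs_sub_le_deltaNorm h hz' i

def l1Dist (a b : Fin d → ℤ) : ℕ :=
  ∑ j, (a j - b j).natAbs

lemma l1Dist_comm (a b : Fin d → ℤ) : l1Dist a b = l1Dist b a :=
  Finset.sum_congr rfl fun j _ => by rw [← Int.natAbs_neg, neg_sub]

lemma l1Dist_eq_zero_iff {a b : Fin d → ℤ} : l1Dist a b = 0 ↔ a = b := by
  simp [l1Dist, Finset.sum_eq_zero_iff, funext_iff, sub_eq_zero]

lemma l1Dist_add_single_sign {a b : Fin d → ℤ} {i : Fin d} (hi : a i ≠ b i) :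
    l1Dist (a + Pi.single i (b i - a i).sign) b + 1 = l1Dist a b := by
  have hterm : ∀ j, ((a + Pi.single i (b i - a i).sign : Fin d → ℤ) j - b j).natAbs
      + (Pi.single i 1 : Fin d → ℕ) j = (a j - b j).natAbs := by
    intro j
    by_cases hj : j = i
    · subst hj
      rcases lt_or_gt_of_ne hi with hlt | hgt
      · simp [Int.sign_eq_one_of_pos (sub_pos.2 hlt)]; omega
      · simp [Int.sign_eq_neg_one_of_neg (sub_neg.2 hgt)]; omega
    · simp [hj]
  simp only [l1Dist, ← Finset.sum_congr rfl fun j _ => hterm j, Finset.sum_add_distrib,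
    Finset.sum_pi_single', Finset.mem_univ, if_true]

lemma abs_sub_le_l1Dist_mul_deltaNorm (h : (Fin d → ℤ) → ℝ) {x : EuclideanSpace ℝ (Fin d)}
    {ρ : ℝ} {a b : Fin d → ℤ} (ha : a ∈ latticeBall x ρ) (hb : b ∈ latticeBall x ρ) :
    |h a - h b| ≤ l1Dist a b * deltaNorm d h x ρ := by
  induction hn : l1Dist a b generalizing a b with
  | zero => simp [l1Dist_eq_zero_iff.1 hn]
  | succ n ih =>
    obtain ⟨i, hi⟩ := Function.ne_iff.1 fun hab => by
      rw [l1Dist_eq_zero_iff.2 hab] at hn; omega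
    have hsign : ∀ {u v : ℤ}, u ≠ v → (v - u).sign.natAbs = 1 := fun huv =>
      Int.natAbs_sign_of_ne_zero (sub_ne_zero.2 huv.symm)
    rcases add_single_sign_mem_latticeBall_or ha hb hi with ha' | hb'
    · have hstep := abs_sub_le_deltaNorm_of_add_single h (hsign hi) ha ha'
      have hrest := ih ha' hb (by have := l1Dist_add_single_sign hi; omega)
      rw [abs_sub_comm] at hstep
      calc |h a - h b| ≤ |h a - h (a + Pi.single i (b i - a i).sign)|
            + |h (a + Pi.single i (b i - a i).sign) - h b| := abs_sub_le _ _ _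
        _ ≤ (n + 1 : ℕ) * deltaNorm d h x ρ := by push_cast; linarith
    · have hstep := abs_sub_le_deltaNorm_of_add_single h (hsign hi.symm) hb hb'
      have hrest := ih ha hb' (by
        have := l1Dist_add_single_sign hi.symm; rw [l1Dist_comm _ a, l1Dist_comm b] at this; omega)
      calc |h a - h b| ≤ |h a - h (b + Pi.single i (a i - b i).sign)|
            + |h (b + Pi.single i (a i - b i).sign) - h b| := abs_sub_le _ _ _
        _ ≤ (n + 1 : ℕ) * deltaNorm d h x ρ := by push_cast; linarith

lemma l1Dist_le_sqrt_mul_dist (a b : Fin d → ℤ) :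
    (l1Dist a b : ℝ) ≤ √d * dist (latticeEmbed d a) (latticeEmbed d b) := by
  have hl1 : (l1Dist a b : ℝ) = ∑ j, |(a j : ℝ) - b j| := by
    simp [l1Dist, Nat.cast_natAbs]
  have hdist : dist (latticeEmbed d a) (latticeEmbed d b) = √(∑ j, ((a j : ℝ) - b j) ^ 2) := by
    simp [EuclideanSpace.dist_eq, Real.dist_eq, sq_abs, latticeEmbed_apply]
  rw [hl1, hdist, ← Real.sqrt_mul (Nat.cast_nonneg d)]
  refine Real.le_sqrt_of_sq_le ?_
  simpa [sq_abs] using sq_sum_le_card_mul_sum_sq (s := Finset.univ)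
    (f := fun j => |(a j : ℝ) - b j|)

lemma abs_sub_le_sqrt_mul_deltaNorm_mul_dist (h : (Fin d → ℤ) → ℝ)
    {x : EuclideanSpace ℝ (Fin d)} {ρ : ℝ} {a b : Fin d → ℤ} (ha : a ∈ latticeBall x ρ)
    (hb : b ∈ latticeBall x ρ) :
    |h a - h b| ≤ √d * deltaNorm d h x ρ * dist (latticeEmbed d a) (latticeEmbed d b) :=
  calc |h a - h b| ≤ l1Dist a b * deltaNorm d h x ρ := abs_sub_le_l1Dist_mul_deltaNorm h ha hb
    _ ≤ √d * dist (latticeEmbed d a) (latticeEmbed d b) * deltaNorm d h x ρ :=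
      mul_le_mul_of_nonneg_right (l1Dist_le_sqrt_mul_dist a b) (deltaNorm_nonneg h x ρ)
    _ = _ := by ring

/-- `round` recovers `z` from `latticeEmbed d z`, so this is `h` transported to the embedded
lattice. -/
lemma lipschitzOnWith_comp_round (h : (Fin d → ℤ) → ℝ) (x : EuclideanSpace ℝ (Fin d)) (ρ : ℝ) :
    LipschitzOnWith (√d * deltaNorm d h x ρ).toNNReal
      (fun y : EuclideanSpace ℝ (Fin d) => h fun j => round (y j))
      (latticeEmbed d '' latticeBall x ρ) := by
  refine LipschitzOnWith.of_dist_le_mul ?_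
  rintro _ ⟨a, ha, rfl⟩ _ ⟨b, hb, rfl⟩
  simpa [latticeEmbed_apply, Real.dist_eq,
    Real.coe_toNNReal _ (mul_nonneg (Real.sqrt_nonneg _) (deltaNorm_nonneg h x ρ))]
    using abs_sub_le_sqrt_mul_deltaNorm_mul_dist h ha hb

end

theorem extension_lemma_general (d : ℕ) (h : (Fin d → ℤ) → ℝ)
    (x : EuclideanSpace ℝ (Fin d)) (r : ℝ) :
    ∃ ht : (Fin d → ℤ) → ℝ,
      (∀ z : Fin d → ℤ, dist (latticeEmbed d z) x ≤ r → ht z = h z) ∧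
      (∀ (z : Fin d → ℤ) (i : Fin d),
        |ht (z + Pi.single i 1) - ht z|
          ≤ Real.sqrt d * deltaNorm d h x (r + Real.sqrt d)) := by
  obtain ⟨g, hg, hgh⟩ := (lipschitzOnWith_comp_round h x (r + √d)).extend_real
  refine ⟨g ∘ latticeEmbed d, fun z hz => ?_, fun z i => ?_⟩
  · have hz' : z ∈ latticeBall x (r + √d) := hz.trans (le_add_of_nonneg_right (Real.sqrt_nonneg d))
    simpa [latticeEmbed_apply] using (hgh (Set.mem_image_of_mem _ hz')).symm
  · have := hg.dist_le_mul (latticeEmbed d (z + Pi.single i 1)) (latticeEmbed d z)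
    rwa [dist_latticeEmbed_add_single_self, mul_one, Real.dist_eq,
      Real.coe_toNNReal _ (mul_nonneg (Real.sqrt_nonneg _) (deltaNorm_nonneg h x _))] at this

/-- any `h : ℤ^d → ℝ` can be modified outside `ℤ^d ∩ B_r(x)` into a function `h̃`
with `sup_z max_i |Δ_i h̃(z)| ≤ √d · ‖Δh‖_{r+√d,∞}`. -/
theorem extension_lemma (d : ℕ) (hd : 0 < d) (h : (Fin d → ℤ) → ℝ)
    (x : EuclideanSpace ℝ (Fin d)) (r : ℝ) (hr : 0 < r) :
    ∃ ht : (Fin d → ℤ) → ℝ,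
      (∀ z : Fin d → ℤ, dist (latticeEmbed d z) x ≤ r → ht z = h z) ∧
      (∀ (z : Fin d → ℤ) (i : Fin d),
        |ht (z + Pi.single i 1) - ht z|
          ≤ Real.sqrt d * deltaNorm d h x (r + Real.sqrt d)) :=
  extension_lemma_general d h x r
end

section
/- Under the vertex-colouring model, for all 1 ≤ i ≤ d and all i' ≠ i: (a) E[W_i] = n π_i²; (b) Var(W_i) = n( π_i²(1 − π_i²) + D̃ π_i³(1 − π_i) ); (c) Cov(W_i, W_{i'}) = − n π_i² π_{i'}² (1 + D̃). -/
open MeasureTheory ProbabilityTheory Finset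
open scoped Classical

/-!
Write `W i` as the sum over edges of the indicators of the events that both endpoints get
colour `i`. By independence, a vertex set `S` is coloured `c` with probability `π c ^ #S`, so
`E[W i * W i']` is a double sum over pairs of edges `(e, f)` whose term only depends on whether
`f = e`, `f` shares exactly one vertex with `e`, or `f` and `e` are disjoint; for `i = i'` these
contribute `π i ^ 2`, `π i ^ 3`, `π i ^ 4`, for `i ≠ i'` they contribute `0`, `0`,
`π i ^ 2 * π i' ^ 2`. There are `n`, `n * D̃` and `n * (n - 1) - n * D̃` pairs of the three kinds,
and the variance and covariance follow from `Cov(X, Y) = E[X Y] - E[X] E[Y]`.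
-/

section IndicatorSums

variable {Ω ι κ : Type*} [MeasurableSpace Ω] {P : Measure Ω} [IsFiniteMeasure P]
  {A : ι → Set Ω} {B : κ → Set Ω}

lemma memLp_sum_indicator_one (p : ENNReal) (s : Finset ι) (hA : ∀ a, MeasurableSet (A a)) :
    MemLp (fun ω => ∑ a ∈ s, (A a).indicator (1 : Ω → ℝ) ω) p P :=
  memLp_finsetSum s fun a _ => memLp_indicator_const p (hA a) 1 (.inr (measure_ne_top P _))

lemma integral_sum_indicator_one (s : Finset ι) (hA : ∀ a, MeasurableSet (A a)) :
    ∫ ω, ∑ a ∈ s, (A a).indicator (1 : Ω → ℝ) ω ∂P = ∑ a ∈ s, P.real (A a) := by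
  rw [integral_finsetSum _ fun a _ => (integrable_const 1).indicator (hA a)]
  exact sum_congr rfl fun a _ => integral_indicator_one (hA a)

lemma integral_sum_indicator_one_mul_sum_indicator_one (s : Finset ι) (t : Finset κ)
    (hA : ∀ a, MeasurableSet (A a)) (hB : ∀ b, MeasurableSet (B b)) :
    ∫ ω, (∑ a ∈ s, (A a).indicator (1 : Ω → ℝ) ω) * ∑ b ∈ t, (B b).indicator (1 : Ω → ℝ) ω ∂P
      = ∑ a ∈ s, ∑ b ∈ t, P.real (A a ∩ B b) := by
  have hmul : ∀ a b ω, (A a).indicator 1 ω * (B b).indicator 1 ω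
      = (A a ∩ B b).indicator (1 : Ω → ℝ) ω := fun a b ω => by
    rw [Set.inter_indicator_one]; rfl
  simp_rw [sum_mul_sum, hmul, ← sum_product']
  exact integral_sum_indicator_one (s ×ˢ t) fun p => (hA p.1).inter (hB p.2)

end IndicatorSums

section Counting

variable {α : Type*} [DecidableEq α]

lemma sum_ite_eq_ite_ite_of_mem {s : Finset α} {a : α} (ha : a ∈ s) (p : α → Prop) [DecidablePred p]
    (x y z : ℝ) :
    ∑ f ∈ s, (if f = a then x else if p f then y else z)
      = x + #{f ∈ s | f ≠ a ∧ p f} * y + (#s - 1 - #{f ∈ s | f ≠ a ∧ p f}) * z := by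
  have hfilter : (s.erase a).filter p = {f ∈ s | f ≠ a ∧ p f} := by
    ext f; simp only [mem_filter, mem_erase]; tauto
  have hcard : (#((s.erase a).filter (¬ p ·)) : ℝ) = #s - 1 - #{f ∈ s | f ≠ a ∧ p f} := by
    have hsplit := card_filter_add_card_filter_not (s := s.erase a) (p := p)
    rw [card_erase_of_mem ha, hfilter] at hsplit
    rw [eq_sub_iff_add_eq, add_comm, ← Nat.cast_add, hsplit,
      Nat.cast_sub (one_le_card.2 ⟨a, ha⟩), Nat.cast_one]
  have hy : ∑ f ∈ {f ∈ s | f ≠ a ∧ p f}, (if f = a then x else if p f then y else z)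
      = #{f ∈ s | f ≠ a ∧ p f} * y := by
    rw [sum_congr rfl fun f hf => ?_, sum_const, nsmul_eq_mul]
    obtain ⟨-, hfa, hpf⟩ := mem_filter.1 hf
    rw [if_neg hfa, if_pos hpf]
  have hz : ∑ f ∈ (s.erase a).filter (¬ p ·), (if f = a then x else if p f then y else z)
      = (#s - 1 - #{f ∈ s | f ≠ a ∧ p f}) * z := by
    rw [sum_congr rfl fun f hf => ?_, sum_const, nsmul_eq_mul, hcard]
    obtain ⟨hf, hpf⟩ := mem_filter.1 hf
    rw [if_neg (ne_of_mem_erase hf), if_neg hpf]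
  rw [← add_sum_erase s _ ha, if_pos rfl, ← sum_filter_add_sum_filter_not (s.erase a) p,
    hfilter, hy, hz, add_assoc]

end Counting

section Colouring

variable {V Ω : Type*} {d : ℕ} {Y : V → Ω → Fin d}

def monochromeEvent (Y : V → Ω → Fin d) (S : Finset V) (c : Fin d) : Set Ω :=
  {ω | ∀ v ∈ S, Y v ω = c}

lemma monochromeEvent_inter_eq_empty {S T : Finset V} (hST : ¬ Disjoint S T) {c c' : Fin d}
    (hc : c ≠ c') : monochromeEvent Y S c ∩ monochromeEvent Y T c' = ∅ := by
  obtain ⟨v, hvS, hvT⟩ := not_disjoint_iff.1 hST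
  ext ω
  simp only [monochromeEvent, Set.mem_inter_iff, Set.mem_ofPred_eq, Set.mem_empty_iff_false,
    iff_false, not_and]
  exact fun hS hT => hc ((hS v hvS).symm.trans (hT v hvT))

lemma monochromeEvent_union [DecidableEq V] (S T : Finset V) (c : Fin d) :
    monochromeEvent Y (S ∪ T) c = monochromeEvent Y S c ∩ monochromeEvent Y T c := by
  ext; simp [monochromeEvent, or_imp, forall_and]

variable [MeasurableSpace Ω] {P : Measure Ω} {π : Fin d → ℝ}

lemma measurableSet_monochromeEvent (hY : ∀ v, Measurable (Y v)) (S : Finset V) (c : Fin d) :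
    MeasurableSet (monochromeEvent Y S c) := by
  have : monochromeEvent Y S c = ⋂ v ∈ S, Y v ⁻¹' {c} := by ext; simp [monochromeEvent]
  rw [this]
  exact S.measurableSet_biInter fun v _ => hY v (measurableSet_singleton c)

lemma measureReal_forall_mem_eq_prod (hY : iIndepFun Y P)
    (hπ : ∀ v i, P.real {ω | Y v ω = i} = π i) (S : Finset V) (g : V → Fin d) :
    P.real {ω | ∀ v ∈ S, Y v ω = g v} = ∏ v ∈ S, π (g v) := by
  have hprod := hY.measure_inter_preimage_eq_mul S (sets := fun v => {g v})
    fun v _ => measurableSet_singleton _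
  have hset : {ω | ∀ v ∈ S, Y v ω = g v} = ⋂ v ∈ S, Y v ⁻¹' {g v} := by ext; simp
  rw [measureReal_def, hset, hprod, ENNReal.toReal_prod]
  exact prod_congr rfl fun v _ => hπ v (g v)

lemma measureReal_monochromeEvent (hY : iIndepFun Y P)
    (hπ : ∀ v i, P.real {ω | Y v ω = i} = π i) (S : Finset V) (c : Fin d) :
    P.real (monochromeEvent Y S c) = π c ^ #S := by
  rw [monochromeEvent, measureReal_forall_mem_eq_prod hY hπ S fun _ => c, prod_const]

lemma measureReal_monochromeEvent_inter_of_disjoint [DecidableEq V] (hY : iIndepFun Y P)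
    (hπ : ∀ v i, P.real {ω | Y v ω = i} = π i) {S T : Finset V} (hST : Disjoint S T)
    (c c' : Fin d) :
    P.real (monochromeEvent Y S c ∩ monochromeEvent Y T c') = π c ^ #S * π c' ^ #T := by
  set g : V → Fin d := fun v => if v ∈ S then c else c'
  have hset : monochromeEvent Y S c ∩ monochromeEvent Y T c'
      = {ω | ∀ v ∈ S ∪ T, Y v ω = g v} := by
    ext ω
    simp +contextual only [monochromeEvent, Set.mem_inter_iff, Set.mem_ofPred_eq, mem_union,
      or_imp, forall_and, g, if_true, disjoint_right.1 hST, if_false]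
  rw [hset, measureReal_forall_mem_eq_prod hY hπ, prod_union hST,
    prod_congr rfl fun v hv => congrArg π (if_pos hv),
    prod_congr rfl fun v hv => congrArg π (if_neg (disjoint_right.1 hST hv)), prod_const,
    prod_const]

end Colouring

lemma Sym2.disjoint_toFinset_iff {V : Type*} [DecidableEq V] {e f : Sym2 V} :
    Disjoint e.toFinset f.toFinset ↔ ¬ ∃ v, v ∈ f ∧ v ∈ e := by
  simp [disjoint_right, Sym2.mem_toFinset]

section Graph

variable {V : Type*} [Fintype V] [DecidableEq V] (G : SimpleGraph V) [DecidableRel G.Adj]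

lemma SimpleGraph.card_toFinset_of_mem_edgeFinset {e : Sym2 V} (he : e ∈ G.edgeFinset) :
    #e.toFinset = 2 :=
  Sym2.card_toFinset_of_not_isDiag e (G.not_isDiag_of_mem_edgeFinset he)

lemma SimpleGraph.card_toFinset_union_of_ne {e f : Sym2 V} (he : e ∈ G.edgeFinset)
    (hf : f ∈ G.edgeFinset) (hfe : f ≠ e) {w : V} (hwf : w ∈ f) (hwe : w ∈ e) :
    #(e.toFinset ∪ f.toFinset) = 3 := by
  obtain ⟨x, rfl⟩ : ∃ x, e = s(w, x) := ⟨_, (Sym2.other_spec hwe).symm⟩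
  obtain ⟨y, rfl⟩ : ∃ y, f = s(w, y) := ⟨_, (Sym2.other_spec hwf).symm⟩
  have hwx : w ≠ x := (G.mem_edgeFinset.1 he).ne
  have hwy : w ≠ y := (G.mem_edgeFinset.1 hf).ne
  have hxy : x ≠ y := fun h => hfe (h ▸ rfl)
  rw [Sym2.toFinset_mk_eq, Sym2.toFinset_mk_eq]
  exact card_eq_three.2 ⟨w, x, y, hwx, hwy, hxy, by ext; simp⟩

def SimpleGraph.edgeDegree (e : Sym2 V) : ℕ :=
  #{f ∈ G.edgeFinset | f ≠ e ∧ ∃ v, v ∈ f ∧ v ∈ e}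

lemma SimpleGraph.sum_sum_edgeFinset_of_eq_ite (φ : Sym2 V → Sym2 V → ℝ) (x y z : ℝ)
    (hφ : ∀ e ∈ G.edgeFinset, ∀ f ∈ G.edgeFinset,
      φ e f = if f = e then x else if ∃ v, v ∈ f ∧ v ∈ e then y else z) :
    ∑ e ∈ G.edgeFinset, ∑ f ∈ G.edgeFinset, φ e f
      = #G.edgeFinset * x + (∑ e ∈ G.edgeFinset, (G.edgeDegree e : ℝ)) * y
        + (#G.edgeFinset * (#G.edgeFinset - 1) - ∑ e ∈ G.edgeFinset, (G.edgeDegree e : ℝ))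
          * z := by
  rw [sum_congr rfl fun e he =>
    (sum_congr rfl (hφ e he)).trans (sum_ite_eq_ite_ite_of_mem he _ x y z)]
  simp only [sum_add_distrib, ← sum_mul, sum_sub_distrib, sum_const, nsmul_eq_mul,
    SimpleGraph.edgeDegree]
  ring

variable {Ω : Type*} [MeasurableSpace Ω] {P : Measure Ω} {d : ℕ} {π : Fin d → ℝ}
  {Y : V → Ω → Fin d}

lemma SimpleGraph.measureReal_monochromeEvent_inter (hY : iIndepFun Y P)
    (hπ : ∀ v i, P.real {ω | Y v ω = i} = π i) {e f : Sym2 V} (he : e ∈ G.edgeFinset)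
    (hf : f ∈ G.edgeFinset) (c : Fin d) :
    P.real (monochromeEvent Y e.toFinset c ∩ monochromeEvent Y f.toFinset c)
      = if f = e then π c ^ 2 else if ∃ v, v ∈ f ∧ v ∈ e then π c ^ 3 else π c ^ 4 := by
  rw [← monochromeEvent_union, measureReal_monochromeEvent hY hπ]
  split_ifs with hfe hshare
  · rw [hfe, union_self, G.card_toFinset_of_mem_edgeFinset he]
  · obtain ⟨w, hwf, hwe⟩ := hshare
    rw [G.card_toFinset_union_of_ne he hf hfe hwf hwe]
  · rw [card_union_of_disjoint (Sym2.disjoint_toFinset_iff.2 hshare),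
      G.card_toFinset_of_mem_edgeFinset he,
      G.card_toFinset_of_mem_edgeFinset hf]

lemma SimpleGraph.measureReal_monochromeEvent_inter_of_ne (hY : iIndepFun Y P)
    (hπ : ∀ v i, P.real {ω | Y v ω = i} = π i) {e f : Sym2 V} (he : e ∈ G.edgeFinset)
    (hf : f ∈ G.edgeFinset) {c c' : Fin d} (hc : c ≠ c') :
    P.real (monochromeEvent Y e.toFinset c ∩ monochromeEvent Y f.toFinset c')
      = if ∃ v, v ∈ f ∧ v ∈ e then 0 else π c ^ 2 * π c' ^ 2 := by
  split_ifs with hshare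
  · rw [monochromeEvent_inter_eq_empty (mt Sym2.disjoint_toFinset_iff.1 (not_not.2 hshare)) hc,
      measureReal_empty]
  · rw [measureReal_monochromeEvent_inter_of_disjoint hY hπ
      (Sym2.disjoint_toFinset_iff.2 hshare),
      G.card_toFinset_of_mem_edgeFinset he,
      G.card_toFinset_of_mem_edgeFinset hf]

noncomputable def SimpleGraph.monochromeCount (Y : V → Ω → Fin d) (c : Fin d) (ω : Ω) : ℝ :=
  ∑ e ∈ G.edgeFinset, (monochromeEvent Y e.toFinset c).indicator 1 ω

variable [IsFiniteMeasure P]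

lemma SimpleGraph.memLp_monochromeCount (hYm : ∀ v, Measurable (Y v)) (p : ENNReal)
    (c : Fin d) : MemLp (G.monochromeCount Y c) p P :=
  memLp_sum_indicator_one p _ fun e => measurableSet_monochromeEvent hYm e.toFinset c

lemma SimpleGraph.integral_monochromeCount (hYm : ∀ v, Measurable (Y v)) (hY : iIndepFun Y P)
    (hπ : ∀ v i, P.real {ω | Y v ω = i} = π i) (c : Fin d) :
    ∫ ω, G.monochromeCount Y c ω ∂P = #G.edgeFinset * π c ^ 2 := by
  refine (integral_sum_indicator_one G.edgeFinset fun e : Sym2 V =>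
    measurableSet_monochromeEvent hYm e.toFinset c).trans ?_
  rw [sum_congr rfl fun e he => by
      rw [measureReal_monochromeEvent hY hπ, G.card_toFinset_of_mem_edgeFinset he],
    sum_const, nsmul_eq_mul]

lemma SimpleGraph.integral_monochromeCount_mul (hYm : ∀ v, Measurable (Y v)) (c c' : Fin d) :
    ∫ ω, G.monochromeCount Y c ω * G.monochromeCount Y c' ω ∂P
      = ∑ e ∈ G.edgeFinset, ∑ f ∈ G.edgeFinset,
          P.real (monochromeEvent Y e.toFinset c ∩ monochromeEvent Y f.toFinset c') :=
  integral_sum_indicator_one_mul_sum_indicator_one _ _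
    (fun e => measurableSet_monochromeEvent hYm e.toFinset c)
    (fun f => measurableSet_monochromeEvent hYm f.toFinset c')

lemma SimpleGraph.integral_monochromeCount_mul_self (hYm : ∀ v, Measurable (Y v))
    (hY : iIndepFun Y P) (hπ : ∀ v i, P.real {ω | Y v ω = i} = π i) (c : Fin d) :
    ∫ ω, G.monochromeCount Y c ω * G.monochromeCount Y c ω ∂P
      = #G.edgeFinset * π c ^ 2 + (∑ e ∈ G.edgeFinset, (G.edgeDegree e : ℝ)) * π c ^ 3
        + (#G.edgeFinset * (#G.edgeFinset - 1) - ∑ e ∈ G.edgeFinset, (G.edgeDegree e : ℝ))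
          * π c ^ 4 := by
  rw [G.integral_monochromeCount_mul hYm]
  exact G.sum_sum_edgeFinset_of_eq_ite _ _ _ _ fun e he f hf =>
    G.measureReal_monochromeEvent_inter hY hπ he hf c

lemma SimpleGraph.integral_monochromeCount_mul_of_ne (hYm : ∀ v, Measurable (Y v))
    (hY : iIndepFun Y P) (hπ : ∀ v i, P.real {ω | Y v ω = i} = π i) {c c' : Fin d}
    (hc : c ≠ c') :
    ∫ ω, G.monochromeCount Y c ω * G.monochromeCount Y c' ω ∂P
      = (#G.edgeFinset * (#G.edgeFinset - 1) - ∑ e ∈ G.edgeFinset, (G.edgeDegree e : ℝ))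
          * (π c ^ 2 * π c' ^ 2) := by
  rw [G.integral_monochromeCount_mul hYm,
    G.sum_sum_edgeFinset_of_eq_ite _ 0 0 (π c ^ 2 * π c' ^ 2) fun e he f hf => ?_]
  · ring
  rw [G.measureReal_monochromeEvent_inter_of_ne hY hπ he hf hc]
  by_cases hfe : f = e
  · subst hfe
    rw [if_pos rfl, if_pos ⟨_, Sym2.out_fst_mem f, Sym2.out_fst_mem f⟩]
  · rw [if_neg hfe]

end Graph

theorem monochrome_edge_moments_general {V : Type*} [Fintype V] [DecidableEq V]
    (G : SimpleGraph V) [DecidableRel G.Adj]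
    (n : ℕ) (hn : n = G.edgeFinset.card)
    (d : ℕ) (π : Fin d → ℝ)
    {Ω : Type*} [MeasurableSpace Ω] (P : Measure Ω) [IsProbabilityMeasure P]
    (Y : V → Ω → Fin d) (hYmeas : ∀ v, Measurable (Y v))
    (hYindep : iIndepFun Y P)
    (hYdist : ∀ v i, (P {ω | Y v ω = i}).toReal = π i)
    (W : Fin d → Ω → ℝ)
    (hW : ∀ i ω, W i ω
      = ∑ e ∈ G.edgeFinset, (if ∀ v ∈ e, Y v ω = i then (1:ℝ) else 0))
    (De : Sym2 V → ℕ)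
    (hDe : ∀ e, De e
      = (G.edgeFinset.filter (fun f => f ≠ e ∧ ∃ v, v ∈ f ∧ v ∈ e)).card)
    (Dt : ℝ) (hDt : Dt = (n : ℝ)⁻¹ * ∑ e ∈ G.edgeFinset, (De e : ℝ))
    (i i' : Fin d) (hii' : i' ≠ i) :
    (∫ ω, W i ω ∂P) = n * (π i) ^ 2 ∧
    (∫ ω, (W i ω - n * (π i) ^ 2) ^ 2 ∂P)
      = n * ((π i) ^ 2 * (1 - (π i) ^ 2) + Dt * (π i) ^ 3 * (1 - π i)) ∧
    (∫ ω, (W i ω - n * (π i) ^ 2) * (W i' ω - n * (π i') ^ 2) ∂P)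
      = -(n : ℝ) * (π i) ^ 2 * (π i') ^ 2 * (1 + Dt) := by
  subst hn
  obtain rfl : W = G.monochromeCount Y := by
    ext c ω
    simp [hW, SimpleGraph.monochromeCount, monochromeEvent, Set.indicator_apply]
  obtain rfl : De = G.edgeDegree := funext hDe
  have hDegSum : ∑ e ∈ G.edgeFinset, (G.edgeDegree e : ℝ) = #G.edgeFinset * Dt := by
    rcases eq_or_ne #G.edgeFinset 0 with hE | hE
    · simp [card_eq_zero.1 hE]
    · rw [hDt, mul_inv_cancel_left₀ (Nat.cast_ne_zero.2 hE)]
  have hmean := G.integral_monochromeCount hYmeas hYindep hYdist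
  have hcov (c c' : Fin d) :
      ∫ ω, (G.monochromeCount Y c ω - #G.edgeFinset * π c ^ 2)
        * (G.monochromeCount Y c' ω - #G.edgeFinset * π c' ^ 2) ∂P
      = ∫ ω, G.monochromeCount Y c ω * G.monochromeCount Y c' ω ∂P
        - #G.edgeFinset * π c ^ 2 * (#G.edgeFinset * π c' ^ 2) := by
    rw [← hmean, ← hmean]
    exact covariance_eq_sub (G.memLp_monochromeCount hYmeas 2 c)
      (G.memLp_monochromeCount hYmeas 2 c')
  refine ⟨hmean i, ?_, ?_⟩
  · simp_rw [sq (G.monochromeCount Y i _ - _)]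
    rw [hcov, G.integral_monochromeCount_mul_self hYmeas hYindep hYdist, hDegSum]
    ring
  · rw [hcov, G.integral_monochromeCount_mul_of_ne hYmeas hYindep hYdist hii'.symm, hDegSum]
    ring

/-- mean, variance and covariance of the numbers of monochrome edges in a
randomly vertex-coloured graph. -/
theorem monochrome_edge_moments {V : Type*} [Fintype V] [DecidableEq V]
    (G : SimpleGraph V) [DecidableRel G.Adj]
    (n : ℕ) (hn : n = G.edgeFinset.card) (hn1 : 1 ≤ n)
    (d : ℕ) (π : Fin d → ℝ) (hπ0 : ∀ i, 0 ≤ π i) (hπ1 : ∑ i, π i = 1)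
    {Ω : Type*} [MeasurableSpace Ω] (P : Measure Ω) [IsProbabilityMeasure P]
    (Y : V → Ω → Fin d) (hYmeas : ∀ v, Measurable (Y v))
    (hYindep : iIndepFun Y P)
    (hYdist : ∀ v i, (P {ω | Y v ω = i}).toReal = π i)
    (W : Fin d → Ω → ℝ)
    (hW : ∀ i ω, W i ω
      = ∑ e ∈ G.edgeFinset, (if ∀ v ∈ e, Y v ω = i then (1:ℝ) else 0))
    (De : Sym2 V → ℕ)
    (hDe : ∀ e, De e
      = (G.edgeFinset.filter (fun f => f ≠ e ∧ ∃ v, v ∈ f ∧ v ∈ e)).card)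
    (Dt : ℝ) (hDt : Dt = (n : ℝ)⁻¹ * ∑ e ∈ G.edgeFinset, (De e : ℝ))
    (i i' : Fin d) (hii' : i' ≠ i) :
    (∫ ω, W i ω ∂P) = n * (π i) ^ 2 ∧
    (∫ ω, (W i ω - n * (π i) ^ 2) ^ 2 ∂P)
      = n * ((π i) ^ 2 * (1 - (π i) ^ 2) + Dt * (π i) ^ 3 * (1 - π i)) ∧
    (∫ ω, (W i ω - n * (π i) ^ 2) * (W i' ω - n * (π i') ^ 2) ∂P)
      = -(n : ℝ) * (π i) ^ 2 * (π i') ^ 2 * (1 + Dt) :=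
  monochrome_edge_moments_general G n hn d π P Y hYmeas hYindep hYdist W hW De hDe Dt hDt i i' hii'
end

section
/- Under the weighted vertex-colouring model, for all 1 ≤ i ≤ d and all i' ≠ i: (a) E[W̃_i] = n π_i² m̃^{(i)}; (b) Var(W̃_i) = n π_i² ( ṽ^{(i)} + (m̃^{(i)})² ( 1 − π_i² + D̃ π_i (1 − π_i) ) ); (c) Cov(W̃_i, W̃_{i'}) = − n π_i² π_{i'}² m̃^{(i)} m̃^{(i')} (1 + D̃). -/
/-!
Write `W̃_c = ∑_e X_e^c` with `X_e^c = 1[both ends of e have colour c] · Ỹ_e^{(c)}`. A product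
`X_e^c X_f^{c'}` is a product of functions of distinct coordinates of the independent family
(the colours of the vertices of `e ∪ f` and the weights), so its mean is `π_c^{|e ∪ f|}` times a
moment of the weights when `c = c'`, is `π_c² π_{c'}² m̃^{(c)} m̃^{(c')}` when `e` and `f` are
disjoint, and vanishes when `e` and `f` meet but `c ≠ c'`. Among the `n²` ordered pairs of edges,
`n` are diagonal, `n D̃` are adjacent and the remaining `n (n - 1) - n D̃` are disjoint; summing
gives `E[W̃_c W̃_{c'}]`, and the variance and covariance follow from
`Cov(X, Y) = E[XY] - E[X] E[Y]`.
-/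

open MeasureTheory ProbabilityTheory Finset
open scoped Classical

theorem Sym2.card_toFinset_union_eq_three {V : Type*} [DecidableEq V] {e f : Sym2 V}
    (he : ¬e.IsDiag) (hf : ¬f.IsDiag) (hef : e ≠ f) {v : V} (hve : v ∈ e) (hvf : v ∈ f) :
    #(e.toFinset ∪ f.toFinset) = 3 := by
  have hinter : #(e.toFinset ∩ f.toFinset) = 1 := by
    refine le_antisymm (card_le_one.2 fun a ha b hb => ?_) (card_pos.2 ⟨v, by simp [hve, hvf]⟩)
    by_contra hab
    simp only [mem_inter, Sym2.mem_toFinset] at ha hb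
    exact hef (((Sym2.mem_and_mem_iff hab).1 ⟨ha.1, hb.1⟩).trans
      ((Sym2.mem_and_mem_iff hab).1 ⟨ha.2, hb.2⟩).symm)
  have := card_union_add_card_inter e.toFinset f.toFinset
  rw [hinter, Sym2.card_toFinset_of_not_isDiag e he, Sym2.card_toFinset_of_not_isDiag f hf] at this
  omega

theorem Finset.sum_ite_eq_ite_of_mem {α R : Type*} [DecidableEq α] [CommRing R] {s : Finset α}
    {a : α} (ha : a ∈ s) (p : α → Prop) [DecidablePred p] (q₁ q₂ q₃ : R) :
    ∑ b ∈ s, (if b = a then q₁ else if p b then q₂ else q₃)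
      = q₁ + #{b ∈ s | b ≠ a ∧ p b} * q₂ + (#s - 1 - #{b ∈ s | b ≠ a ∧ p b}) * q₃ := by
  have hfilter : {b ∈ s | b ≠ a ∧ p b} = {b ∈ s.erase a | p b} := by
    ext b
    simp only [mem_filter, mem_erase]
    tauto
  rw [← card_erase_add_one ha, ← card_filter_add_card_filter_not (s := s.erase a) p,
    ← add_sum_erase s _ ha, if_pos rfl, sum_congr rfl fun b hb => if_neg (ne_of_mem_erase hb),
    sum_ite, sum_const, sum_const, nsmul_eq_mul, nsmul_eq_mul, hfilter]
  push_cast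
  ring

theorem Finset.sum_sum_ite_eq_ite {α R : Type*} [DecidableEq α] [CommRing R] (s : Finset α)
    (p : α → α → Prop) [DecidableRel p] (q₁ q₂ q₃ : R) :
    ∑ a ∈ s, ∑ b ∈ s, (if b = a then q₁ else if p a b then q₂ else q₃)
      = #s * q₁ + (∑ a ∈ s, (#{b ∈ s | b ≠ a ∧ p a b} : R)) * q₂
        + (#s * (#s - 1) - ∑ a ∈ s, (#{b ∈ s | b ≠ a ∧ p a b} : R)) * q₃ := by
  rw [sum_congr rfl fun a ha => sum_ite_eq_ite_of_mem ha (p a) q₁ q₂ q₃]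
  simp only [sum_add_distrib, ← sum_mul, sum_sub_distrib, sum_const, nsmul_eq_mul]
  ring

theorem integral_sq_eq_of_integral_sub_sq {Ω : Type*} [MeasurableSpace Ω] {P : Measure Ω}
    [IsProbabilityMeasure P] {X : Ω → ℝ} (hX : MemLp X 2 P) {m v : ℝ} (hm : ∫ ω, X ω ∂P = m)
    (hv : ∫ ω, (X ω - m) ^ 2 ∂P = v) :
    ∫ ω, X ω ^ 2 ∂P = v + m ^ 2 := by
  have := variance_eq_sub hX
  rw [variance_eq_integral hX.aemeasurable, hm, hv] at this
  simp only [Pi.pow_apply] at this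
  linarith

theorem prod_colour_indicator_mul_prod {V Ω : Type*} [DecidableEq V] {d : ℕ} (Y : V → Ω → Fin d)
    (A B : Finset V) (c : Fin d) (ω : Ω) :
    (∏ v ∈ A, if Y v ω = c then (1 : ℝ) else 0) * ∏ v ∈ B, (if Y v ω = c then (1 : ℝ) else 0)
      = ∏ v ∈ A ∪ B, if Y v ω = c then (1 : ℝ) else 0 := by
  simp only [prod_boole, mem_union, or_imp, forall_and, ite_zero_mul_ite_zero, mul_one]

/-- Colours enter the independent family cast to `ℤ`, so that colours and weights form one family
of integer-valued random variables. -/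
structure IsWeightedColouring {V J Ω : Type*} {d : ℕ} [MeasurableSpace Ω] (P : Measure Ω)
    (π : Fin d → ℝ) (Y : V → Ω → Fin d) (T : J → Ω → ℤ) : Prop where
  measurable_colour : ∀ v, Measurable (Y v)
  measurable_weight : ∀ j, Measurable (T j)
  indep : iIndepFun (Sum.elim (fun v ω => ((Y v ω : ℕ) : ℤ)) T) P
  colour_law : ∀ v c, (P {ω | Y v ω = c}).toReal = π c

namespace IsWeightedColouring

variable {V J Ω : Type*} {d : ℕ} [MeasurableSpace Ω] {P : Measure Ω} {π : Fin d → ℝ}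
  {Y : V → Ω → Fin d} {T : J → Ω → ℤ}

theorem integral_colour_indicator (h : IsWeightedColouring P π Y T) (v : V) (c : Fin d) :
    ∫ ω, (if ((Y v ω : ℕ) : ℤ) = ((c : ℕ) : ℤ) then (1 : ℝ) else 0) ∂P = π c := by
  have hset : MeasurableSet {ω | Y v ω = c} := h.measurable_colour v (measurableSet_singleton c)
  simp_rw [Nat.cast_inj, Fin.val_inj]
  rw [← h.colour_law v c, ← measureReal_def, ← integral_indicator_one hset]
  simp only [Set.indicator_apply, Set.mem_ofPred_eq, Pi.one_apply]

theorem integral_prod_colour_indicator_mul_prod [Fintype V] [Fintype J]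
    (h : IsWeightedColouring P π Y T) (A : Finset V) (κ : V → Fin d) (B : Finset J)
    (ψ : J → ℤ → ℝ) :
    ∫ ω, (∏ v ∈ A, if Y v ω = κ v then (1 : ℝ) else 0) * ∏ j ∈ B, ψ j (T j ω) ∂P
      = (∏ v ∈ A, π (κ v)) * ∏ j ∈ B, ∫ ω, ψ j (T j ω) ∂P := by
  have := h.indep.isProbabilityMeasure
  -- padding with the constant `1` outside `A` and `B` gives a product over all coordinates
  let f : V ⊕ J → ℤ → ℝ := Sum.elim
    (fun v z => if v ∈ A then (if z = ((κ v : ℕ) : ℤ) then 1 else 0) else 1)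
    (fun j z => if j ∈ B then ψ j z else 1)
  have hmeas : ∀ i, Measurable (Sum.elim (fun v ω => ((Y v ω : ℕ) : ℤ)) T i) := by
    rintro (v | j)
    · exact (measurable_from_top (f := fun k : Fin d => ((k : ℕ) : ℤ))).comp
        (h.measurable_colour v)
    · exact h.measurable_weight j
  have key := h.indep.integral_fun_prod_comp (f := f) (fun i => (hmeas i).aemeasurable)
    fun i => measurable_from_top.aestronglyMeasurable
  have hA : ∀ v, ∫ ω, f (Sum.inl v) ((Y v ω : ℕ) : ℤ) ∂P = if v ∈ A then π (κ v) else 1 := by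
    intro v
    by_cases hv : v ∈ A
    · simpa [f, hv] using h.integral_colour_indicator v (κ v)
    · simp [f, hv]
  have hB : ∀ j, ∫ ω, f (Sum.inr j) (T j ω) ∂P = if j ∈ B then ∫ ω, ψ j (T j ω) ∂P else 1 := by
    intro j
    by_cases hj : j ∈ B <;> simp [f, hj]
  simp only [Fintype.prod_sum_type, Sum.elim_inl, Sum.elim_inr, hA, hB] at key
  simpa [f, Finset.prod_ite_mem, Nat.cast_inj, Fin.val_inj] using key

end IsWeightedColouring

section EdgeTerms

variable {V Ω : Type*} [Fintype V] [DecidableEq V] {d : ℕ} {s : Finset (Sym2 V)}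

noncomputable def edgeTerm (Y : V → Ω → Fin d) (T : s → Fin d → Ω → ℤ) (e : s) (c : Fin d)
    (ω : Ω) : ℝ :=
  (if ∀ v ∈ (e : Sym2 V), Y v ω = c then 1 else 0) * T e c ω

/-- `W̃_c`, for the edge set `s`. -/
noncomputable def weightedCount (Y : V → Ω → Fin d) (T : s → Fin d → Ω → ℤ) (c : Fin d)
    (ω : Ω) : ℝ :=
  ∑ e ∈ s.attach, edgeTerm Y T e c ω

/-- `∑_e D_e = n D̃`, for the edge set `s`. -/
def adjacentPairs (s : Finset (Sym2 V)) : ℕ :=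
  ∑ e ∈ s, #{f ∈ s | f ≠ e ∧ ∃ v, v ∈ f ∧ v ∈ e}

variable {Y : V → Ω → Fin d} {T : s → Fin d → Ω → ℤ}

theorem edgeTerm_eq_prod (e : s) (c : Fin d) (ω : Ω) :
    edgeTerm Y T e c ω
      = (∏ v ∈ (e : Sym2 V).toFinset, if Y v ω = c then (1 : ℝ) else 0) * T e c ω := by
  rw [edgeTerm, prod_boole]
  simp [Sym2.mem_toFinset]

theorem edgeTerm_mul_edgeTerm_eq_zero {e f : s} {c c' : Fin d} (hcc' : c ≠ c')
    (hef : ∃ v, v ∈ (f : Sym2 V) ∧ v ∈ (e : Sym2 V)) (ω : Ω) :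
    edgeTerm Y T e c ω * edgeTerm Y T f c' ω = 0 := by
  obtain ⟨v, hvf, hve⟩ := hef
  simp only [edgeTerm]
  split_ifs with hc hc'
  · exact absurd ((hc v hve).symm.trans (hc' v hvf)) hcc'
  all_goals simp

variable [MeasurableSpace Ω] {P : Measure Ω} {π : Fin d → ℝ}

theorem memLp_edgeTerm (hY : ∀ v, Measurable (Y v)) {e : s} {c : Fin d}
    (hT : MemLp (fun ω => (T e c ω : ℝ)) 2 P) : MemLp (edgeTerm Y T e c) 2 P := by
  refine hT.of_le ?_ (ae_of_all _ fun ω => ?_)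
  · have hind : ∀ v, Measurable fun ω => if Y v ω = c then (1 : ℝ) else 0 := fun v =>
      (measurable_from_top (f := fun k : Fin d => if k = c then (1 : ℝ) else 0)).comp (hY v)
    simp_rw [funext (edgeTerm_eq_prod e c)]
    exact (Finset.measurable_prod _ fun v _ => hind v).aestronglyMeasurable.mul
      hT.aestronglyMeasurable
  · rw [edgeTerm]
    split_ifs <;> simp

theorem memLp_weightedCount (hX : ∀ e c, MemLp (edgeTerm Y T e c) 2 P) (c : Fin d) :
    MemLp (weightedCount Y T c) 2 P :=
  memLp_finsetSum _ fun e _ => hX e c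

theorem integral_edgeTerm (h : IsWeightedColouring P π Y (Function.uncurry T))
    (hs : ∀ e ∈ s, ¬e.IsDiag) (e : s) (c : Fin d) :
    ∫ ω, edgeTerm Y T e c ω ∂P = π c ^ 2 * ∫ ω, (T e c ω : ℝ) ∂P := by
  simp_rw [edgeTerm_eq_prod]
  have := h.integral_prod_colour_indicator_mul_prod (e : Sym2 V).toFinset (fun _ => c) {(e, c)}
    fun _ z => (z : ℝ)
  simpa [Sym2.card_toFinset_of_not_isDiag _ (hs e e.2)] using this

theorem integral_edgeTerm_mul_edgeTerm_same_colour
    (h : IsWeightedColouring P π Y (Function.uncurry T)) (e f : s) (c : Fin d) :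
    ∫ ω, edgeTerm Y T e c ω * edgeTerm Y T f c ω ∂P
      = π c ^ #((e : Sym2 V).toFinset ∪ (f : Sym2 V).toFinset)
        * if e = f then ∫ ω, (T e c ω : ℝ) ^ 2 ∂P
          else (∫ ω, (T e c ω : ℝ) ∂P) * ∫ ω, (T f c ω : ℝ) ∂P := by
  have hsplit : ∀ ω, edgeTerm Y T e c ω * edgeTerm Y T f c ω
      = (∏ v ∈ (e : Sym2 V).toFinset ∪ (f : Sym2 V).toFinset,
          if Y v ω = c then (1 : ℝ) else 0) * ((T e c ω : ℝ) * T f c ω) := by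
    intro ω
    rw [edgeTerm_eq_prod, edgeTerm_eq_prod, ← prod_colour_indicator_mul_prod]
    ring
  simp_rw [hsplit]
  split_ifs with hef
  · subst hef
    have := h.integral_prod_colour_indicator_mul_prod
      ((e : Sym2 V).toFinset ∪ (e : Sym2 V).toFinset) (fun _ => c) {(e, c)}
      fun _ z => (z : ℝ) ^ 2
    simpa [sq] using this
  · have hne : (e, c) ≠ (f, c) := fun h' => hef (congrArg Prod.fst h')
    have := h.integral_prod_colour_indicator_mul_prod
      ((e : Sym2 V).toFinset ∪ (f : Sym2 V).toFinset) (fun _ => c) {(e, c), (f, c)}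
      fun _ z => (z : ℝ)
    simpa [prod_pair hne] using this

theorem integral_edgeTerm_mul_edgeTerm_of_disjoint
    (h : IsWeightedColouring P π Y (Function.uncurry T)) (hs : ∀ e ∈ s, ¬e.IsDiag) {e f : s}
    (hef : ¬∃ v, v ∈ (f : Sym2 V) ∧ v ∈ (e : Sym2 V)) (c c' : Fin d) :
    ∫ ω, edgeTerm Y T e c ω * edgeTerm Y T f c' ω ∂P
      = π c ^ 2 * π c' ^ 2 * (∫ ω, (T e c ω : ℝ) ∂P) * ∫ ω, (T f c' ω : ℝ) ∂P := by
  have hdisj : Disjoint (e : Sym2 V).toFinset (f : Sym2 V).toFinset :=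
    disjoint_left.2 fun v hve hvf => hef ⟨v, Sym2.mem_toFinset.1 hvf, Sym2.mem_toFinset.1 hve⟩
  have hne : (e, c) ≠ (f, c') := by
    rintro ⟨⟩
    exact hef ⟨_, (e : Sym2 V).out_fst_mem, (e : Sym2 V).out_fst_mem⟩
  let κ : V → Fin d := fun v => if v ∈ (e : Sym2 V) then c else c'
  have hκe : ∀ v ∈ (e : Sym2 V).toFinset, κ v = c := fun v hv => if_pos (Sym2.mem_toFinset.1 hv)
  have hκf : ∀ v ∈ (f : Sym2 V).toFinset, κ v = c' := fun v hv =>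
    if_neg fun hve => hef ⟨v, Sym2.mem_toFinset.1 hv, hve⟩
  have hsplit : ∀ ω, edgeTerm Y T e c ω * edgeTerm Y T f c' ω
      = (∏ v ∈ (e : Sym2 V).toFinset ∪ (f : Sym2 V).toFinset,
          if Y v ω = κ v then (1 : ℝ) else 0)
        * ∏ j ∈ {(e, c), (f, c')}, (Function.uncurry T j ω : ℝ) := by
    intro ω
    have he : ∏ v ∈ (e : Sym2 V).toFinset, (if Y v ω = κ v then (1 : ℝ) else 0)
        = ∏ v ∈ (e : Sym2 V).toFinset, if Y v ω = c then 1 else 0 :=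
      prod_congr rfl fun v hv => by rw [hκe v hv]
    have hf : ∏ v ∈ (f : Sym2 V).toFinset, (if Y v ω = κ v then (1 : ℝ) else 0)
        = ∏ v ∈ (f : Sym2 V).toFinset, if Y v ω = c' then 1 else 0 :=
      prod_congr rfl fun v hv => by rw [hκf v hv]
    rw [edgeTerm_eq_prod, edgeTerm_eq_prod, prod_union hdisj, prod_pair hne, he, hf,
      Function.uncurry_apply_pair, Function.uncurry_apply_pair]
    ring
  simp_rw [hsplit]
  rw [h.integral_prod_colour_indicator_mul_prod _ κ _ fun _ z => (z : ℝ), prod_union hdisj,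
    prod_congr rfl fun v hv => congrArg π (hκe v hv),
    prod_congr rfl fun v hv => congrArg π (hκf v hv), prod_const, prod_const,
    Sym2.card_toFinset_of_not_isDiag _ (hs e e.2), Sym2.card_toFinset_of_not_isDiag _ (hs f f.2),
    prod_pair hne, Function.uncurry_apply_pair, Function.uncurry_apply_pair]
  ring

theorem integral_weightedCount (h : IsWeightedColouring P π Y (Function.uncurry T))
    (hs : ∀ e ∈ s, ¬e.IsDiag) (hX : ∀ e c, MemLp (edgeTerm Y T e c) 2 P) (c : Fin d) {m : ℝ}
    (hm : ∀ e, ∫ ω, (T e c ω : ℝ) ∂P = m) :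
    ∫ ω, weightedCount Y T c ω ∂P = #s * (π c ^ 2 * m) := by
  have := h.indep.isProbabilityMeasure
  simp only [weightedCount]
  rw [integral_finsetSum _ fun e _ => (hX e c).integrable one_le_two]
  simp [integral_edgeTerm h hs, hm]

theorem integral_weightedCount_mul (hX : ∀ e c, MemLp (edgeTerm Y T e c) 2 P) (c c' : Fin d)
    (q₁ q₂ q₃ : ℝ) (hval : ∀ e f : s, ∫ ω, edgeTerm Y T e c ω * edgeTerm Y T f c' ω ∂P
      = if (f : Sym2 V) = e then q₁ else if ∃ v, v ∈ (f : Sym2 V) ∧ v ∈ (e : Sym2 V) then q₂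
        else q₃) :
    ∫ ω, weightedCount Y T c ω * weightedCount Y T c' ω ∂P
      = #s * q₁ + adjacentPairs s * q₂ + (#s * (#s - 1) - adjacentPairs s) * q₃ := by
  have hint : ∀ e f : s, Integrable (fun ω => edgeTerm Y T e c ω * edgeTerm Y T f c' ω) P :=
    fun e f => (hX e c).integrable_mul (hX f c')
  simp only [weightedCount, sum_mul_sum]
  rw [integral_finsetSum _ fun e _ => integrable_finsetSum _ fun f _ => hint e f]
  simp only [integral_finsetSum _ fun f _ => hint _ f, hval]
  let g : Sym2 V → Sym2 V → ℝ := fun E F =>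
    if F = E then q₁ else if ∃ v, v ∈ F ∧ v ∈ E then q₂ else q₃
  change ∑ e ∈ s.attach, ∑ f ∈ s.attach, g e f = _
  rw [sum_congr rfl fun (e : s) _ => sum_attach s (g e), sum_attach s fun E => ∑ F ∈ s, g E F,
    adjacentPairs]
  push_cast
  exact sum_sum_ite_eq_ite s (fun E F => ∃ v, v ∈ F ∧ v ∈ E) q₁ q₂ q₃

theorem integral_weightedCount_mul_self (h : IsWeightedColouring P π Y (Function.uncurry T))
    (hs : ∀ e ∈ s, ¬e.IsDiag) (hX : ∀ e c, MemLp (edgeTerm Y T e c) 2 P) (c : Fin d)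
    {m m₂ : ℝ} (hm : ∀ e, ∫ ω, (T e c ω : ℝ) ∂P = m) (hm₂ : ∀ e, ∫ ω, (T e c ω : ℝ) ^ 2 ∂P = m₂) :
    ∫ ω, weightedCount Y T c ω * weightedCount Y T c ω ∂P
      = #s * (π c ^ 2 * m₂) + adjacentPairs s * (π c ^ 3 * m ^ 2)
        + (#s * (#s - 1) - adjacentPairs s) * (π c ^ 2 * π c ^ 2 * m * m) := by
  refine integral_weightedCount_mul hX c c _ _ _ fun e f => ?_
  by_cases hfe : (f : Sym2 V) = e
  · obtain rfl : f = e := Subtype.ext hfe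
    rw [integral_edgeTerm_mul_edgeTerm_same_colour h, if_pos rfl, if_pos rfl, union_self,
      Sym2.card_toFinset_of_not_isDiag _ (hs f f.2), hm₂]
  rw [if_neg hfe]
  split_ifs with hadj
  · obtain ⟨v, hvf, hve⟩ := hadj
    rw [integral_edgeTerm_mul_edgeTerm_same_colour h,
      if_neg fun hef => hfe (congrArg Subtype.val hef.symm),
      Sym2.card_toFinset_union_eq_three (hs e e.2) (hs f f.2) (Ne.symm hfe) hve hvf, hm, hm]
    ring
  · rw [integral_edgeTerm_mul_edgeTerm_of_disjoint h hs hadj, hm, hm]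

theorem integral_weightedCount_mul_of_ne (h : IsWeightedColouring P π Y (Function.uncurry T))
    (hs : ∀ e ∈ s, ¬e.IsDiag) (hX : ∀ e c, MemLp (edgeTerm Y T e c) 2 P) {c c' : Fin d}
    (hcc' : c ≠ c') {m m' : ℝ} (hm : ∀ e, ∫ ω, (T e c ω : ℝ) ∂P = m)
    (hm' : ∀ e, ∫ ω, (T e c' ω : ℝ) ∂P = m') :
    ∫ ω, weightedCount Y T c ω * weightedCount Y T c' ω ∂P
      = (#s * (#s - 1) - adjacentPairs s) * (π c ^ 2 * π c' ^ 2 * m * m') := by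
  have := integral_weightedCount_mul hX c c' 0 0 (π c ^ 2 * π c' ^ 2 * m * m') fun e f => ?_
  · simpa using this
  by_cases hadj : ∃ v, v ∈ (f : Sym2 V) ∧ v ∈ (e : Sym2 V)
  · simp [edgeTerm_mul_edgeTerm_eq_zero hcc' hadj, hadj]
  · have hfe : (f : Sym2 V) ≠ e := fun hfe =>
      hadj ⟨_, (f : Sym2 V).out_fst_mem, hfe ▸ (f : Sym2 V).out_fst_mem⟩
    rw [integral_edgeTerm_mul_edgeTerm_of_disjoint h hs hadj, if_neg hfe, if_neg hadj, hm, hm']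

end EdgeTerms

theorem weighted_monochrome_edge_moments_general {V : Type*} [Fintype V] [DecidableEq V]
    (G : SimpleGraph V) [DecidableRel G.Adj]
    (n : ℕ) (hn : n = G.edgeFinset.card)
    (d : ℕ) (π : Fin d → ℝ)
    {Ω : Type*} [MeasurableSpace Ω] (P : Measure Ω) [IsProbabilityMeasure P]
    (Y : V → Ω → Fin d) (hYmeas : ∀ v, Measurable (Y v))
    (hYdist : ∀ v i, (P {ω | Y v ω = i}).toReal = π i)
    -- the integer-valued edge weights
    (T : {e // e ∈ G.edgeFinset} → Fin d → Ω → ℤ)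
    (hTmeas : ∀ e c, Measurable (T e c))
    -- joint independence of all the colours and all the weights
    (hindep : iIndepFun
      (Sum.elim (fun v : V => fun ω => ((Y v ω : ℕ) : ℤ))
        (fun p : {e // e ∈ G.edgeFinset} × Fin d => T p.1 p.2)) P)
    -- finite second moments
    (hT2 : ∀ e c, Integrable (fun ω => ((T e c ω : ℝ)) ^ 2) P)
    (mt vt : Fin d → ℝ)
    (hmt : ∀ e c, ∫ ω, (T e c ω : ℝ) ∂P = mt c)
    (hvt : ∀ e c, ∫ ω, ((T e c ω : ℝ) - mt c) ^ 2 ∂P = vt c)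
    (Wt : Fin d → Ω → ℝ)
    (hWt : ∀ c ω, Wt c ω
      = ∑ e ∈ G.edgeFinset.attach,
          (if ∀ v ∈ e.1, Y v ω = c then (1:ℝ) else 0) * (T e c ω : ℝ))
    (De : Sym2 V → ℕ)
    (hDe : ∀ e, De e
      = (G.edgeFinset.filter (fun f => f ≠ e ∧ ∃ v, v ∈ f ∧ v ∈ e)).card)
    (Dt : ℝ) (hDt : Dt = (n : ℝ)⁻¹ * ∑ e ∈ G.edgeFinset, (De e : ℝ))
    (i i' : Fin d) (hii' : i' ≠ i) :
    (∫ ω, Wt i ω ∂P) = n * (π i) ^ 2 * mt i ∧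
    (∫ ω, (Wt i ω - n * (π i) ^ 2 * mt i) ^ 2 ∂P)
      = n * (π i) ^ 2 * (vt i + (mt i) ^ 2 * (1 - (π i) ^ 2 + Dt * π i * (1 - π i))) ∧
    (∫ ω, (Wt i ω - n * (π i) ^ 2 * mt i) * (Wt i' ω - n * (π i') ^ 2 * mt i') ∂P)
      = -(n : ℝ) * (π i) ^ 2 * (π i') ^ 2 * mt i * mt i' * (1 + Dt) := by
  have h : IsWeightedColouring P π Y (Function.uncurry T) :=
    ⟨hYmeas, fun p => hTmeas p.1 p.2, hindep, hYdist⟩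
  have hs : ∀ e ∈ G.edgeFinset, ¬e.IsDiag := fun e he =>
    G.not_isDiag_of_mem_edgeSet (SimpleGraph.mem_edgeFinset.1 he)
  have hT : ∀ e c, MemLp (fun ω => (T e c ω : ℝ)) 2 P := fun e c =>
    (memLp_two_iff_integrable_sq ((measurable_from_top (f := fun z : ℤ => (z : ℝ))).comp
      (hTmeas e c)).aestronglyMeasurable).2 (hT2 e c)
  have hX : ∀ e c, MemLp (edgeTerm Y T e c) 2 P := fun e c => memLp_edgeTerm hYmeas (hT e c)
  have hS : (adjacentPairs G.edgeFinset : ℝ) = n * Dt := by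
    rw [hDt, hn, inv_mul_eq_div, ← expect_eq_sum_div_card, card_mul_expect, adjacentPairs]
    simp [hDe]
  obtain rfl : Wt = weightedCount Y T := by
    funext c ω
    rw [hWt]
    rfl
  have hW := memLp_weightedCount hX
  have hmean : ∀ c, ∫ ω, weightedCount Y T c ω ∂P = n * π c ^ 2 * mt c := fun c => by
    rw [integral_weightedCount h hs hX c (hmt · c), hn]
    ring
  refine ⟨hmean i, ?_, ?_⟩
  · rw [← hmean i, ← variance_eq_integral (hW i).aemeasurable,
      ← covariance_self (hW i).aemeasurable, covariance_eq_sub (hW i) (hW i)]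
    simp only [Pi.mul_apply]
    rw [integral_weightedCount_mul_self h hs hX i (hmt · i)
      fun e => integral_sq_eq_of_integral_sub_sq (hT e i) (hmt e i) (hvt e i), hmean i, ← hn, hS]
    ring
  · rw [← hmean i, ← hmean i']
    change covariance _ _ P = _
    rw [covariance_eq_sub (hW i) (hW i')]
    simp only [Pi.mul_apply]
    rw [integral_weightedCount_mul_of_ne h hs hX hii'.symm (hmt · i) (hmt · i'), hmean i, hmean i',
      ← hn, hS]
    ring

/-- mean, variance and covariance of the weighted monochrome edge counts in a
randomly vertex-coloured graph with independent integer edge weights. -/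
theorem weighted_monochrome_edge_moments {V : Type*} [Fintype V] [DecidableEq V]
    (G : SimpleGraph V) [DecidableRel G.Adj]
    (n : ℕ) (hn : n = G.edgeFinset.card) (hn1 : 1 ≤ n)
    (d : ℕ) (π : Fin d → ℝ) (hπ0 : ∀ i, 0 ≤ π i) (hπ1 : ∑ i, π i = 1)
    {Ω : Type*} [MeasurableSpace Ω] (P : Measure Ω) [IsProbabilityMeasure P]
    (Y : V → Ω → Fin d) (hYmeas : ∀ v, Measurable (Y v))
    (hYdist : ∀ v i, (P {ω | Y v ω = i}).toReal = π i)
    -- the integer-valued edge weights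
    (T : {e // e ∈ G.edgeFinset} → Fin d → Ω → ℤ)
    (hTmeas : ∀ e c, Measurable (T e c))
    -- joint independence of all the colours and all the weights
    (hindep : iIndepFun
      (Sum.elim (fun v : V => fun ω => ((Y v ω : ℕ) : ℤ))
        (fun p : {e // e ∈ G.edgeFinset} × Fin d => T p.1 p.2)) P)
    -- the law of `T e c` depends only on `c`
    (hTdist : ∀ e e' c, Measure.map (T e c) P = Measure.map (T e' c) P)
    -- finite second moments
    (hT2 : ∀ e c, Integrable (fun ω => ((T e c ω : ℝ)) ^ 2) P)
    (mt vt : Fin d → ℝ)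
    (hmt : ∀ e c, ∫ ω, (T e c ω : ℝ) ∂P = mt c)
    (hvt : ∀ e c, ∫ ω, ((T e c ω : ℝ) - mt c) ^ 2 ∂P = vt c)
    (Wt : Fin d → Ω → ℝ)
    (hWt : ∀ c ω, Wt c ω
      = ∑ e ∈ G.edgeFinset.attach,
          (if ∀ v ∈ e.1, Y v ω = c then (1:ℝ) else 0) * (T e c ω : ℝ))
    (De : Sym2 V → ℕ)
    (hDe : ∀ e, De e
      = (G.edgeFinset.filter (fun f => f ≠ e ∧ ∃ v, v ∈ f ∧ v ∈ e)).card)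
    (Dt : ℝ) (hDt : Dt = (n : ℝ)⁻¹ * ∑ e ∈ G.edgeFinset, (De e : ℝ))
    (i i' : Fin d) (hii' : i' ≠ i) :
    (∫ ω, Wt i ω ∂P) = n * (π i) ^ 2 * mt i ∧
    (∫ ω, (Wt i ω - n * (π i) ^ 2 * mt i) ^ 2 ∂P)
      = n * (π i) ^ 2 * (vt i + (mt i) ^ 2 * (1 - (π i) ^ 2 + Dt * π i * (1 - π i))) ∧
    (∫ ω, (Wt i ω - n * (π i) ^ 2 * mt i) * (Wt i' ω - n * (π i') ^ 2 * mt i') ∂P)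
      = -(n : ℝ) * (π i) ^ 2 * (π i') ^ 2 * mt i * mt i' * (1 + Dt) :=
  weighted_monochrome_edge_moments_general G n hn d π P Y hYmeas hYdist T hTmeas hindep hT2 mt vt
    hmt hvt Wt hWt De hDe Dt hDt i i' hii'
end

section
/- Let (Z_j)_{j ≥ 0} be a Markov chain on a finite state space S with transition matrix P started at an arbitrary fixed state s ∈ S, and suppose there are a probability vector π on S with π_r > 0 for all r, a constant C < ∞ and ρ ∈ (0,1) such that |(P^k)_{ir} − π_r| ≤ C ρ^k for all k ≥ 1 and all i, r ∈ S. For i ∈ S and n ≥ 1 let W_{in} := ∑_{j=1}^n 1[Z_j = i]. Then for all i, r ∈ S: (a) lim_{n→∞} n^{-1} E[W_{in}] = π_i; and (b) lim_{n→∞} n^{-1} Cov(W_{in}, W_{rn}) = V_{ir}, where V_{ir} := π_i ∑_{k ≥ 1} ((P^k)_{ir} − π_r) + π_r ∑_{k ≥ 1} ((P^k)_{ri} − π_i) + δ_{ir} π_i − π_i π_r, with δ_{ir} the Kronecker delta (the two series converge absolutely by the geometric ergodicity hypothesis). -/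
/-!
The path probabilities determine the two-time law
`ℙ[Z_j = a, Z_{j+k} = b] = (P^j)_{sa} (P^k)_{ab}`: the probability of a cylinder of length `n`
intersected with an event about the later path is propagated one step at a time, exactly as a
matrix power acts on a vector. Hence the mean and covariance of the occupation times are explicit
sums of entries of powers of `P`. The mean is a Cesàro average of `(P^j)_{si} → π_i`. By
Stolz–Cesàro the normalised covariance has the limit of its increments from `n` to `n + 1`; the
off-diagonal part of an increment is a convolution of the convergent sequence `(P^j)_{si}` with the
geometrically small `(P^k)_{ir} - π_r`, whose limit `π_i ∑_k ((P^k)_{ir} - π_r)` follows from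
Tannery's theorem.
-/

open MeasureTheory ProbabilityTheory Finset Filter Topology
open scoped Matrix

theorem tendsto_inv_mul_of_tendsto_sub {c : ℕ → ℝ} {l : ℝ} (h0 : c 0 = 0)
    (h : Tendsto (fun n => c (n + 1) - c n) atTop (𝓝 l)) :
    Tendsto (fun n : ℕ => (n : ℝ)⁻¹ * c n) atTop (𝓝 l) := by
  simpa only [sum_range_sub, h0, sub_zero] using h.cesaro

theorem sum_range_succ_sum_range_succ_sub {M : Type*} [AddCommGroup M] (e : ℕ → ℕ → M) (n : ℕ) :
    ∑ j ∈ range (n + 1), ∑ l ∈ range (n + 1), e j l - ∑ j ∈ range n, ∑ l ∈ range n, e j l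
      = ∑ j ∈ range n, e j n + ∑ l ∈ range n, e n l + e n n := by
  simp only [sum_range_succ, sum_add_distrib]
  abel

theorem sum_Icc_one_eq_sum_range {M : Type*} [AddCommMonoid M] (f : ℕ → M) (n : ℕ) :
    ∑ j ∈ Icc 1 n, f j = ∑ j ∈ range n, f (j + 1) := by
  rw [range_eq_Ico, sum_Ico_add' f 0 n 1]
  rfl

theorem tendsto_sum_range_mul_sub {u d ε g : ℕ → ℝ} {α : ℝ} (hu : Tendsto u atTop (𝓝 α))
    (hg : Summable g) (hg_anti : Antitone g) (hd : ∀ k, |d k| ≤ g k) (hε : ∀ n, |ε n| ≤ g n) :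
    Tendsto (fun n => ∑ k ∈ range n, u (n - k) * (d k - ε n)) atTop (𝓝 (α * ∑' k, d k)) := by
  obtain ⟨B, hB⟩ := hu.norm.bddAbove_range
  have hu_le : ∀ m, |u m| ≤ B := fun m => hB ⟨m, rfl⟩
  have hε0 : Tendsto ε atTop (𝓝 0) := squeeze_zero_norm hε hg.tendsto_atTop_zero
  set F : ℕ → ℕ → ℝ := fun n k => if k < n then u (n - k) * (d k - ε n) else 0
  have hF : ∀ n, ∑ k ∈ range n, u (n - k) * (d k - ε n) = ∑' k, F n k := fun n => by
    rw [tsum_eq_sum (s := range n) fun k hk => if_neg (by simpa using hk)]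
    exact sum_congr rfl fun k hk => (if_pos (mem_range.1 hk)).symm
  simp_rw [hF, ← tsum_mul_left]
  refine tendsto_tsum_of_dominated_convergence (hg.mul_left (2 * B))
    (fun k => ?_) (.of_forall fun n k => ?_)
  · have h := (hu.comp (tendsto_sub_atTop_nat k)).mul (tendsto_const_nhds (x := d k) |>.sub hε0)
    rw [sub_zero] at h
    exact h.congr' ((eventually_gt_atTop k).mono fun n hn => (if_pos hn).symm)
  · have hB0 : 0 ≤ B := (abs_nonneg _).trans (hu_le 0)
    simp only [F]
    split_ifs with hk
    · rw [norm_mul, Real.norm_eq_abs, Real.norm_eq_abs]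
      calc |u (n - k)| * |d k - ε n| ≤ B * (g k + g k) := by
            gcongr
            · exact hu_le _
            · exact (abs_sub _ _).trans (add_le_add (hd k) ((hε n).trans (hg_anti hk.le)))
        _ = 2 * B * g k := by ring
    · rw [norm_zero]
      exact mul_nonneg (by positivity) ((abs_nonneg _).trans (hd k))

section GeometricErgodicity

variable {S : Type*} [Fintype S] [DecidableEq S] {P : Matrix S S ℝ} {π : S → ℝ}

theorem exists_summable_antitone_of_geometric {C ρ : ℝ} (hρ : ρ ∈ Set.Ioo (0 : ℝ) 1)
    (hgeo : ∀ k : ℕ, 1 ≤ k → ∀ i r, |(P ^ k) i r - π r| ≤ C * ρ ^ k) :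
    ∃ g : ℕ → ℝ, Summable g ∧ Antitone g ∧ ∀ k x c, |(P ^ (k + 1)) x c - π c| ≤ g k := by
  obtain ⟨hρ0, hρ1⟩ := hρ
  refine ⟨fun k => |C| * ρ ^ (k + 1), ?_, fun m n hmn => ?_, fun k x c => ?_⟩
  · simpa [pow_succ', mul_assoc] using (summable_geometric_of_lt_one hρ0.le hρ1).mul_left (|C| * ρ)
  · exact mul_le_mul_of_nonneg_left (pow_le_pow_of_le_one hρ0.le hρ1.le (by omega)) (abs_nonneg C)
  · exact (hgeo (k + 1) k.succ_pos x c).trans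
      (mul_le_mul_of_nonneg_right (le_abs_self C) (pow_nonneg hρ0.le _))

variable {g : ℕ → ℝ}

theorem tendsto_pow_succ_apply (hg : Tendsto g atTop (𝓝 0))
    (hgeo : ∀ k x c, |(P ^ (k + 1)) x c - π c| ≤ g k) (x c : S) :
    Tendsto (fun k => (P ^ (k + 1)) x c) atTop (𝓝 (π c)) :=
  tendsto_iff_norm_sub_tendsto_zero.2 <| squeeze_zero_norm (by simpa using (hgeo · x c)) hg

theorem tendsto_sum_pow_mul_pow_sub (hg : Summable g) (hg_anti : Antitone g)
    (hgeo : ∀ k x c, |(P ^ (k + 1)) x c - π c| ≤ g k) (s a b : S) :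
    Tendsto (fun n => ∑ j ∈ range n, (P ^ (j + 1)) s a * ((P ^ (n - j)) a b - (P ^ (n + 1)) s b))
      atTop (𝓝 (π a * ∑' k, ((P ^ (k + 1)) a b - π b))) := by
  have hu : Tendsto (fun m => (P ^ m) s a) atTop (𝓝 (π a)) :=
    (tendsto_add_atTop_iff_nat 1).1 (tendsto_pow_succ_apply hg.tendsto_atTop_zero hgeo s a)
  refine (tendsto_sum_range_mul_sub hu hg hg_anti (hgeo · a b) (hgeo · s b)).congr fun n => ?_
  rw [← sum_range_reflect]
  refine sum_congr rfl fun j hj => ?_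
  have hj : j < n := mem_range.1 hj
  rw [show n - (n - 1 - j) = j + 1 by omega, show n - 1 - j + 1 = n - j by omega]
  ring

end GeometricErgodicity

theorem covariance_indicator_one {Ω : Type*} [MeasurableSpace Ω] {μ : Measure Ω}
    [IsProbabilityMeasure μ] {A B : Set Ω} (hA : MeasurableSet A) (hB : MeasurableSet B) :
    cov[A.indicator 1, B.indicator 1; μ] = μ.real (A ∩ B) - μ.real A * μ.real B := by
  have hLp : ∀ {C : Set Ω}, MeasurableSet C → MemLp (C.indicator (1 : Ω → ℝ)) 2 μ :=
    fun hC => (memLp_const 1).indicator hC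
  rw [covariance_eq_sub (hLp hA) (hLp hB), ← Set.inter_indicator_one,
    integral_indicator_one (hA.inter hB), integral_indicator_one hA, integral_indicator_one hB]

section MarkovChain

variable {S Ω : Type*} {Z : ℕ → Ω → S}

def pathCylinder (Z : ℕ → Ω → S) (n : ℕ) (x : ℕ → S) : Set Ω := {ω | ∀ t ≤ n, Z t ω = x t}

theorem pathCylinder_inter_preimage_succ (n : ℕ) (x : ℕ → S) (y : S) :
    pathCylinder Z n x ∩ Z (n + 1) ⁻¹' {y}
      = pathCylinder Z (n + 1) (Function.update x (n + 1) y) := by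
  ext ω
  simp only [pathCylinder, Set.mem_inter_iff, Set.mem_ofPred_eq]
  constructor
  · rintro ⟨hx, hy⟩ t ht
    rcases Nat.le_succ_iff.1 ht with ht | rfl
    · rw [Function.update_of_ne (by omega), hx t ht]
    · rw [Function.update_self, hy]
  · intro h
    refine ⟨fun t ht => ?_, by simpa using h (n + 1) le_rfl⟩
    rw [h t (by omega), Function.update_of_ne (by omega)]

theorem pathCylinder_inter_preimage_eq_ite [DecidableEq S] (n : ℕ) (x : ℕ → S) (c : S) :
    pathCylinder Z n x ∩ Z n ⁻¹' {c} = if x n = c then pathCylinder Z n x else ∅ := by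
  split_ifs with hxc
  · exact Set.inter_eq_left.2 fun ω hω => (hω n le_rfl).trans hxc
  · exact Set.eq_empty_of_forall_notMem fun ω ⟨hω, hω'⟩ => hxc ((hω n le_rfl).symm.trans hω')

noncomputable def occupationTime (Z : ℕ → Ω → S) (a : S) (n : ℕ) : Ω → ℝ :=
  ∑ j ∈ range n, (Z (j + 1) ⁻¹' {a}).indicator 1

variable [MeasurableSpace Ω]

def IsMarkovChainFrom [Fintype S] [DecidableEq S] (μ : Measure Ω) (Z : ℕ → Ω → S)
    (P : Matrix S S ℝ) (s : S) : Prop :=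
  ∀ n x, μ.real (pathCylinder Z n x)
    = (if x 0 = s then 1 else 0) * ∏ t ∈ range n, P (x t) (x (t + 1))

variable {μ : Measure Ω}

theorem IsMarkovChainFrom.measureReal_pathCylinder_succ [Fintype S] [DecidableEq S]
    {P : Matrix S S ℝ} {s : S} (hM : IsMarkovChainFrom μ Z P s) (n : ℕ) (x : ℕ → S) (y : S) :
    μ.real (pathCylinder Z (n + 1) (Function.update x (n + 1) y))
      = μ.real (pathCylinder Z n x) * P (x n) y := by
  have hx : ∀ t ≤ n, Function.update x (n + 1) y t = x t := fun t ht =>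
    Function.update_of_ne (by omega) _ _
  rw [hM, hM, prod_range_succ, hx 0 n.zero_le, hx n le_rfl, Function.update_self,
    prod_congr rfl fun t ht => by rw [hx t (mem_range.1 ht).le, hx (t + 1) (mem_range.1 ht)]]
  ring

variable [MeasurableSpace S] [MeasurableSingletonClass S]

theorem measurableSet_pathCylinder (hZ : ∀ t, Measurable (Z t)) (n : ℕ) (x : ℕ → S) :
    MeasurableSet (pathCylinder Z n x) := by
  simp only [pathCylinder, Set.ofPred_forall]
  exact .iInter fun t => .iInter fun _ => hZ t (measurableSet_singleton (x t))

theorem measureReal_eq_sum_inter_preimage [Fintype S] [IsFiniteMeasure μ]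
    (hZ : ∀ t, Measurable (Z t)) (m : ℕ) {A : Set Ω} (hA : MeasurableSet A) :
    μ.real A = ∑ y, μ.real (A ∩ Z m ⁻¹' {y}) := by
  have hA_eq : A = ⋃ y ∈ (univ : Finset S), A ∩ Z m ⁻¹' {y} := by ext; simp
  conv_lhs => rw [hA_eq]
  refine measureReal_biUnion_finset (fun y _ y' _ hyy' => ?_)
    (fun y _ => hA.inter (hZ m (measurableSet_singleton y)))
  exact Disjoint.mono Set.inter_subset_right Set.inter_subset_right
    (Set.disjoint_left.2 fun ω h h' => hyy' (h.symm.trans h'))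

variable [Fintype S] [DecidableEq S] {P : Matrix S S ℝ} {s : S}

namespace IsMarkovChainFrom

variable [IsFiniteMeasure μ]

theorem measureReal_pathCylinder_inter (hM : IsMarkovChainFrom μ Z P s)
    (hZ : ∀ t, Measurable (Z t)) {A : ℕ → Set Ω} (hA : ∀ n, MeasurableSet (A n)) {g : S → ℝ}
    (hg : ∀ n x, μ.real (pathCylinder Z n x ∩ A n) = μ.real (pathCylinder Z n x) * g (x n))
    (j n : ℕ) (x : ℕ → S) :
    μ.real (pathCylinder Z n x ∩ A (n + j))
      = μ.real (pathCylinder Z n x) * (P ^ j *ᵥ g) (x n) := by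
  induction j generalizing n x with
  | zero => simp [hg]
  | succ j ih =>
    rw [measureReal_eq_sum_inter_preimage hZ (n + 1)
      ((measurableSet_pathCylinder hZ n x).inter (hA _))]
    calc ∑ y, μ.real (pathCylinder Z n x ∩ A (n + (j + 1)) ∩ Z (n + 1) ⁻¹' {y})
        = ∑ y, μ.real (pathCylinder Z n x) * (P (x n) y * (P ^ j *ᵥ g) y) := by
          refine sum_congr rfl fun y _ => ?_
          rw [Set.inter_right_comm, pathCylinder_inter_preimage_succ, ← add_assoc, add_right_comm,
            ih, hM.measureReal_pathCylinder_succ, Function.update_self, mul_assoc]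
      _ = μ.real (pathCylinder Z n x) * (P ^ (j + 1) *ᵥ g) (x n) := by
          rw [← mul_sum, pow_succ', ← Matrix.mulVec_mulVec]
          rfl

theorem measureReal_pathCylinder_inter_preimage (hM : IsMarkovChainFrom μ Z P s)
    (hZ : ∀ t, Measurable (Z t)) (k n : ℕ) (x : ℕ → S) (b : S) :
    μ.real (pathCylinder Z n x ∩ Z (n + k) ⁻¹' {b})
      = μ.real (pathCylinder Z n x) * (P ^ k) (x n) b := by
  have h := hM.measureReal_pathCylinder_inter hZ (A := fun n => Z n ⁻¹' {b})
    (fun n => hZ n (measurableSet_singleton b)) (g := Pi.single b 1) (fun n x => by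
      rw [pathCylinder_inter_preimage_eq_ite]
      split_ifs with hxb <;> simp [hxb]) k n x
  simpa [Matrix.mulVec_single_one] using h

theorem measureReal_pathCylinder_inter_preimage_inter_preimage (hM : IsMarkovChainFrom μ Z P s)
    (hZ : ∀ t, Measurable (Z t)) (j k n : ℕ) (x : ℕ → S) (a b : S) :
    μ.real (pathCylinder Z n x ∩ (Z (n + j) ⁻¹' {a} ∩ Z (n + j + k) ⁻¹' {b}))
      = μ.real (pathCylinder Z n x) * ((P ^ j) (x n) a * (P ^ k) a b) := by
  have h := hM.measureReal_pathCylinder_inter hZ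
    (A := fun n => Z n ⁻¹' {a} ∩ Z (n + k) ⁻¹' {b})
    (fun n => (hZ n (measurableSet_singleton a)).inter (hZ _ (measurableSet_singleton b)))
    (g := Pi.single a ((P ^ k) a b)) (fun n x => by
      rw [← Set.inter_assoc, pathCylinder_inter_preimage_eq_ite]
      split_ifs with hxa <;> simp [hxa, hM.measureReal_pathCylinder_inter_preimage hZ]) j n x
  simpa [mul_comm] using h

theorem measureReal_preimage_inter_preimage (hM : IsMarkovChainFrom μ Z P s)
    (hZ : ∀ t, Measurable (Z t)) (j k : ℕ) (a b : S) :
    μ.real (Z j ⁻¹' {a} ∩ Z (j + k) ⁻¹' {b}) = (P ^ j) s a * (P ^ k) a b := by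
  have hstart : ∀ y : S, Z 0 ⁻¹' {y} = pathCylinder Z 0 (fun _ => y) := fun y => by
    ext ω; simp [pathCylinder]
  rw [measureReal_eq_sum_inter_preimage hZ 0
    ((hZ j (measurableSet_singleton a)).inter (hZ _ (measurableSet_singleton b)))]
  have hcyl := fun y => hM.measureReal_pathCylinder_inter_preimage_inter_preimage hZ j k 0
    (fun _ => y) a b
  simp only [zero_add] at hcyl
  simp_rw [Set.inter_comm _ (Z 0 ⁻¹' _), hstart, hcyl, hM 0]
  simp

theorem measureReal_preimage (hM : IsMarkovChainFrom μ Z P s) (hZ : ∀ t, Measurable (Z t)) (j : ℕ)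
    (a : S) : μ.real (Z j ⁻¹' {a}) = (P ^ j) s a := by
  simpa using hM.measureReal_preimage_inter_preimage hZ j 0 a a

theorem integral_occupationTime (hM : IsMarkovChainFrom μ Z P s) (hZ : ∀ t, Measurable (Z t))
    (a : S) (n : ℕ) : ∫ ω, occupationTime Z a n ω ∂μ = ∑ j ∈ range n, (P ^ (j + 1)) s a := by
  have hint : ∀ j, Integrable ((Z j ⁻¹' {a}).indicator (1 : Ω → ℝ)) μ := fun j =>
    (integrable_const 1).indicator (hZ j (measurableSet_singleton a))
  simp_rw [occupationTime, Finset.sum_apply, integral_finsetSum _ fun j _ => hint (j + 1),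
    integral_indicator_one (hZ _ (measurableSet_singleton a)), hM.measureReal_preimage hZ]

end IsMarkovChainFrom

variable [IsProbabilityMeasure μ]

theorem IsMarkovChainFrom.covariance_indicator_preimage (hM : IsMarkovChainFrom μ Z P s)
    (hZ : ∀ t, Measurable (Z t)) {j n : ℕ} (hjn : j ≤ n) (a b : S) :
    cov[(Z j ⁻¹' {a}).indicator 1, (Z n ⁻¹' {b}).indicator 1; μ]
      = (P ^ j) s a * ((P ^ (n - j)) a b - (P ^ n) s b) := by
  obtain ⟨k, rfl⟩ := Nat.exists_eq_add_of_le hjn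
  rw [covariance_indicator_one (hZ j (measurableSet_singleton a))
      (hZ _ (measurableSet_singleton b)),
    hM.measureReal_preimage_inter_preimage hZ, hM.measureReal_preimage hZ,
    hM.measureReal_preimage hZ, Nat.add_sub_cancel_left]
  ring

theorem IsMarkovChainFrom.covariance_occupationTime_succ_sub (hM : IsMarkovChainFrom μ Z P s)
    (hZ : ∀ t, Measurable (Z t)) (a b : S) (n : ℕ) :
    cov[occupationTime Z a (n + 1), occupationTime Z b (n + 1); μ]
        - cov[occupationTime Z a n, occupationTime Z b n; μ]
      = ∑ j ∈ range n, (P ^ (j + 1)) s a * ((P ^ (n - j)) a b - (P ^ (n + 1)) s b)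
        + ∑ j ∈ range n, (P ^ (j + 1)) s b * ((P ^ (n - j)) b a - (P ^ (n + 1)) s a)
        + (P ^ (n + 1)) s a * ((if a = b then 1 else 0) - (P ^ (n + 1)) s b) := by
  have hLp : ∀ j c, MemLp ((Z j ⁻¹' {c}).indicator (1 : Ω → ℝ)) 2 μ := fun j c =>
    (memLp_const 1).indicator (hZ j (measurableSet_singleton c))
  have hcross : ∀ c d, ∑ j ∈ range n,
      cov[(Z (j + 1) ⁻¹' {c}).indicator 1, (Z (n + 1) ⁻¹' {d}).indicator 1; μ]
      = ∑ j ∈ range n, (P ^ (j + 1)) s c * ((P ^ (n - j)) c d - (P ^ (n + 1)) s d) :=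
    fun c d => sum_congr rfl fun j hj => by
      rw [hM.covariance_indicator_preimage hZ (Nat.add_le_add_right (mem_range.1 hj).le 1),
        Nat.add_sub_add_right]
  simp only [occupationTime, covariance_sum_sum' (fun j _ => hLp (j + 1) a)
    (fun l _ => hLp (l + 1) b)]
  rw [sum_range_succ_sum_range_succ_sub, hcross, hM.covariance_indicator_preimage hZ le_rfl]
  simp_rw [covariance_comm ((Z (n + 1) ⁻¹' {a}).indicator 1)]
  simp [hcross, Matrix.one_apply]

end MarkovChain

theorem occupation_time_moment_asymptotics_general
    {S : Type*} [Fintype S] [DecidableEq S]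
    [MeasurableSpace S] [MeasurableSingletonClass S]
    (P : Matrix S S ℝ)
    (π : S → ℝ)
    (C ρ : ℝ) (hρ : ρ ∈ Set.Ioo (0 : ℝ) 1)
    (hgeo : ∀ k : ℕ, 1 ≤ k → ∀ i r, |(P ^ k) i r - π r| ≤ C * ρ ^ k)
    {Ω : Type*} [MeasurableSpace Ω] (μ : Measure Ω) [IsProbabilityMeasure μ]
    (s : S) (Z : ℕ → Ω → S) (hZmeas : ∀ j, Measurable (Z j))
    -- the law of `Z` is the canonical path measure of the chain with transition matrix `P`
    -- started at `s`
    (hpath : ∀ (j : ℕ) (path : ℕ → S),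
      (μ {ω | ∀ t ≤ j, Z t ω = path t}).toReal
        = (if path 0 = s then 1 else 0) * ∏ t ∈ Finset.range j, P (path t) (path (t + 1)))
    (W : S → ℕ → Ω → ℝ)
    (hW : ∀ i nn ω, W i nn ω = ∑ j ∈ Finset.Icc 1 nn, (if Z j ω = i then (1:ℝ) else 0))
    (Vlim : S → S → ℝ)
    (hV : ∀ i r, Vlim i r
      = π i * (∑' k : ℕ, ((P ^ (k + 1)) i r - π r))
        + π r * (∑' k : ℕ, ((P ^ (k + 1)) r i - π i))
        + (if i = r then π i else 0) - π i * π r)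
    (i r : S) :
    Tendsto (fun nn : ℕ => (nn : ℝ)⁻¹ * ∫ ω, W i nn ω ∂μ) atTop (nhds (π i)) ∧
    Tendsto (fun nn : ℕ => (nn : ℝ)⁻¹ *
        ∫ ω, (W i nn ω - ∫ ω', W i nn ω' ∂μ) * (W r nn ω - ∫ ω', W r nn ω' ∂μ) ∂μ)
      atTop (nhds (Vlim i r)) := by
  have hM : IsMarkovChainFrom μ Z P s := hpath
  obtain ⟨g, hg, hg_anti, hgeo'⟩ := exists_summable_antitone_of_geometric hρ hgeo
  have hlim := tendsto_pow_succ_apply hg.tendsto_atTop_zero hgeo' s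
  obtain rfl : W = occupationTime Z := by
    ext a n ω
    rw [hW, occupationTime, sum_Icc_one_eq_sum_range, Finset.sum_apply]
    exact sum_congr rfl fun j _ => by simp [Set.indicator]
  refine ⟨?_, ?_⟩
  · simp_rw [hM.integral_occupationTime hZmeas]
    exact (hlim i).cesaro
  · refine tendsto_inv_mul_of_tendsto_sub
      (c := fun n => cov[occupationTime Z i n, occupationTime Z r n; μ])
      (by simp [occupationTime]) ?_
    simp_rw [hM.covariance_occupationTime_succ_sub hZmeas]
    convert ((tendsto_sum_pow_mul_pow_sub hg hg_anti hgeo' s i r).add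
      (tendsto_sum_pow_mul_pow_sub hg hg_anti hgeo' s r i)).add
      ((hlim i).mul (tendsto_const_nhds.sub (hlim r))) using 2
    rw [hV]
    split_ifs <;> ring

/-- for a geometrically ergodic finite Markov chain started at `s`, the occupation
times `W_{in} = ∑_{j=1}^n 1[Z_j = i]` satisfy `n⁻¹ E[W_{in}] → π_i` and
`n⁻¹ Cov(W_{in}, W_{rn}) → V_{ir}`. -/
theorem occupation_time_moment_asymptotics
    {S : Type*} [Fintype S] [DecidableEq S] [Nonempty S]
    [MeasurableSpace S] [MeasurableSingletonClass S]
    (P : Matrix S S ℝ) (hP0 : ∀ i r, 0 ≤ P i r) (hProw : ∀ i, ∑ r, P i r = 1)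
    (π : S → ℝ) (hπpos : ∀ r, 0 < π r) (hπ1 : ∑ r, π r = 1)
    (C ρ : ℝ) (hρ : ρ ∈ Set.Ioo (0 : ℝ) 1)
    (hgeo : ∀ k : ℕ, 1 ≤ k → ∀ i r, |(P ^ k) i r - π r| ≤ C * ρ ^ k)
    {Ω : Type*} [MeasurableSpace Ω] (μ : Measure Ω) [IsProbabilityMeasure μ]
    (s : S) (Z : ℕ → Ω → S) (hZmeas : ∀ j, Measurable (Z j))
    -- the law of `Z` is the canonical path measure of the chain with transition matrix `P`
    -- started at `s`
    (hpath : ∀ (j : ℕ) (path : ℕ → S),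
      (μ {ω | ∀ t ≤ j, Z t ω = path t}).toReal
        = (if path 0 = s then 1 else 0) * ∏ t ∈ Finset.range j, P (path t) (path (t + 1)))
    (W : S → ℕ → Ω → ℝ)
    (hW : ∀ i nn ω, W i nn ω = ∑ j ∈ Finset.Icc 1 nn, (if Z j ω = i then (1:ℝ) else 0))
    (Vlim : S → S → ℝ)
    (hV : ∀ i r, Vlim i r
      = π i * (∑' k : ℕ, ((P ^ (k + 1)) i r - π r))
        + π r * (∑' k : ℕ, ((P ^ (k + 1)) r i - π i))
        + (if i = r then π i else 0) - π i * π r)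
    (i r : S) :
    Tendsto (fun nn : ℕ => (nn : ℝ)⁻¹ * ∫ ω, W i nn ω ∂μ) atTop (nhds (π i)) ∧
    Tendsto (fun nn : ℕ => (nn : ℝ)⁻¹ *
        ∫ ω, (W i nn ω - ∫ ω', W i nn ω' ∂μ) * (W r nn ω - ∫ ω', W r nn ω' ∂μ) ∂μ)
      atTop (nhds (Vlim i r)) :=
  occupation_time_moment_asymptotics_general P π C ρ hρ hgeo μ s Z hZmeas hpath W hW Vlim hV i r
end

section
/- Let S be a finite set, P a row-stochastic matrix on S, π a probability vector on S with π_r > 0 for all r ∈ S, and suppose there are C < ∞ and ρ ∈ (0,1) with |(P^m)_{ir} − π_r| ≤ C ρ^m for all m ≥ 1 and all i, r ∈ S. Then there exist C' < ∞ and K ∈ ℕ such that for all j, k ≥ K and all i, r, s ∈ S, one has (P^{j+k})_{is} > 0 and | (P^j)_{ir} (P^k)_{rs} / (P^{j+k})_{is} − π_r | ≤ C' ρ^{min(j,k)}. -/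
open Finset

/-- geometric ergodicity implies that conditional transition ratios
`(P^j)_{ir} (P^k)_{rs} / (P^{j+k})_{is}` are close to `π_r`, uniformly, with a geometric rate. -/
theorem markov_bridge_estimate {S : Type*} [Fintype S] [DecidableEq S] [Nonempty S]
    (P : Matrix S S ℝ)
    (hP0 : ∀ i r, 0 ≤ P i r) (hProw : ∀ i, ∑ r, P i r = 1)
    (π : S → ℝ) (hπpos : ∀ r, 0 < π r) (hπ1 : ∑ r, π r = 1)
    (C : ℝ) (ρ : ℝ) (hρ : ρ ∈ Set.Ioo (0 : ℝ) 1)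
    (hgeo : ∀ m : ℕ, 1 ≤ m → ∀ i r, |(P ^ m) i r - π r| ≤ C * ρ ^ m) :
    ∃ (C' : ℝ) (K : ℕ), ∀ j k : ℕ, K ≤ j → K ≤ k → ∀ i r s : S,
      0 < (P ^ (j + k)) i s ∧
      |(P ^ j) i r * (P ^ k) r s / (P ^ (j + k)) i s - π r| ≤ C' * ρ ^ (min j k) := by
  obtain ⟨hρ0, hρ1⟩ := hρ
  have hpow0 : ∀ m (i r : S), 0 ≤ (P ^ m) i r := by
    intro m
    induction m with
    | zero => intro i r; rw [pow_zero, Matrix.one_apply]; split <;> norm_num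
    | succ n ih =>
      intro i r
      rw [pow_succ, Matrix.mul_apply]
      exact Finset.sum_nonneg fun j _ => mul_nonneg (ih i j) (hP0 j r)
  have hpowrow : ∀ m (i : S), ∑ r, (P ^ m) i r = 1 := by
    intro m
    induction m with
    | zero => intro i; simp [Matrix.one_apply]
    | succ n ih =>
      intro i
      simp only [pow_succ, Matrix.mul_apply]
      rw [Finset.sum_comm]
      have h : ∀ j : S, ∑ r, (P ^ n) i j * P j r = (P ^ n) i j := by
        intro j; rw [← Finset.mul_sum, hProw j, mul_one]
      simp_rw [h]
      exact ih i
  have hpowle1 : ∀ m (i r : S), (P ^ m) i r ≤ 1 := by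
    intro m i r
    rw [← hpowrow m i]
    exact Finset.single_le_sum (fun j _ => hpow0 m i j) (Finset.mem_univ r)
  have hπle1 : ∀ r, π r ≤ 1 := by
    intro r
    rw [← hπ1]
    exact Finset.single_le_sum (fun j _ => (hπpos j).le) (Finset.mem_univ r)
  set πm : ℝ := Finset.univ.inf' Finset.univ_nonempty π with hπmdef
  have hπmle : ∀ r, πm ≤ π r := fun r => Finset.inf'_le π (Finset.mem_univ r)
  have hπm0 : 0 < πm := by
    rw [hπmdef, Finset.lt_inf'_iff]
    exact fun b _ => hπpos b
  have hC : 0 ≤ C := by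
    obtain ⟨i⟩ := ‹Nonempty S›
    have h := (abs_nonneg _).trans (hgeo 1 le_rfl i i)
    nlinarith
  obtain ⟨K0, hK0⟩ := exists_pow_lt_of_lt_one
    (show (0:ℝ) < πm / (2 * (C + 1)) by positivity) hρ1
  refine ⟨6 * C / πm, K0 + 1, ?_⟩
  intro j k hj hk i r s
  have hρle : ∀ m : ℕ, K0 ≤ m → C * ρ ^ m ≤ πm / 2 := by
    intro m hm
    have h1 : ρ ^ m ≤ ρ ^ K0 := pow_le_pow_of_le_one hρ0.le hρ1.le hm
    have h3' : ρ ^ K0 * (2 * (C + 1)) < πm := (lt_div_iff₀ (by positivity)).mp hK0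
    have h2 : (0:ℝ) < ρ ^ K0 := pow_pos hρ0 K0
    nlinarith [mul_le_mul_of_nonneg_left h1 hC]
  set a := (P ^ j) i r
  set b := (P ^ k) r s
  set c := (P ^ (j + k)) i s
  have haπ := hgeo j (by omega) i r
  have hbπ := hgeo k (by omega) r s
  have hcπ := hgeo (j + k) (by omega) i s
  have hc : πm / 2 ≤ c := by
    have h1 : C * ρ ^ (j + k) ≤ πm / 2 := hρle (j + k) (by omega)
    have h2 := (abs_le.mp hcπ).1
    have h3 := hπmle s
    linarith
  have hc0 : 0 < c := lt_of_lt_of_le (by linarith) hc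
  have hmj : ρ ^ j ≤ ρ ^ (min j k) :=
    pow_le_pow_of_le_one hρ0.le hρ1.le (min_le_left j k)
  have hmk : ρ ^ k ≤ ρ ^ (min j k) :=
    pow_le_pow_of_le_one hρ0.le hρ1.le (min_le_right j k)
  have hmjk : ρ ^ (j + k) ≤ ρ ^ (min j k) :=
    pow_le_pow_of_le_one hρ0.le hρ1.le (by omega)
  have hnum : |a * b - π r * c| ≤ 3 * C * ρ ^ (min j k) := by
    have e : a * b - π r * c = (a - π r) * b + π r * ((b - π s) + (π s - c)) := by ring
    have h1 : |(a - π r) * b| ≤ C * ρ ^ j := by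
      rw [abs_mul]
      calc |a - π r| * |b| ≤ (C * ρ ^ j) * 1 := by
            apply mul_le_mul haπ _ (abs_nonneg b) (le_trans (abs_nonneg _) haπ)
            rw [abs_of_nonneg (hpow0 k r s)]
            exact hpowle1 k r s
        _ = C * ρ ^ j := mul_one _
    have h2 : |π r * ((b - π s) + (π s - c))| ≤ C * ρ ^ k + C * ρ ^ (j + k) := by
      rw [abs_mul, abs_of_pos (hπpos r)]
      calc π r * |(b - π s) + (π s - c)|
          ≤ 1 * (|b - π s| + |π s - c|) :=
            mul_le_mul (hπle1 r) (abs_add_le _ _) (abs_nonneg _) zero_le_one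
        _ ≤ C * ρ ^ k + C * ρ ^ (j + k) := by
            rw [one_mul, abs_sub_comm (π s) c]
            linarith
    calc |a * b - π r * c| ≤ |(a - π r) * b| + |π r * ((b - π s) + (π s - c))| := by
          rw [e]; exact abs_add_le _ _
      _ ≤ C * ρ ^ j + (C * ρ ^ k + C * ρ ^ (j + k)) := by linarith
      _ ≤ 3 * C * ρ ^ (min j k) := by nlinarith
  refine ⟨hc0, ?_⟩
  have key : a * b / c - π r = (a * b - π r * c) / c := by
    field_simp
  rw [key, abs_div, abs_of_pos hc0]
  calc |a * b - π r * c| / c ≤ (3 * C * ρ ^ (min j k)) / (πm / 2) :=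
        div_le_div₀ (by positivity) hnum (by linarith) hc
    _ = 6 * C / πm * ρ ^ (min j k) := by
        field_simp
        ring
end

section
/- Let 0 ≤ b < d. For λ ≥ b², λ > 0, let E(λ) := { (α₁, α₂) ∈ ℝ² : 0 ≤ α₁ ≤ 1 − b λ^{-1/2}, max(0, 1 − d λ^{-1/2} − α₁) ≤ α₂ ≤ 1 − b λ^{-1/2} − α₁ }. Then lim_{λ → ∞} √λ ∫∫_{E(λ)} exp( −λ(1 − α₁ − α₂)²/2 ) dα₂ dα₁ = ∫_b^d exp(−x²/2) dx. -/
/-!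
The integrand depends only on `z = α₁ + α₂`, and `E(λ)` is the part of the quadrant
`α₁, α₂ ≥ 0` where `1 - d/√λ ≤ z ≤ 1 - b/√λ`. The shear `(α₁, α₂) ↦ (α₂, α₁ + α₂)` turns the
double integral into `∫ max z 0 · exp(-λ(1 - z)²/2) dz`, and the substitution `z = 1 - t/√λ` gives
the exact identity `√λ ∫∫_{E(λ)} = ∫_b^d max (1 - t/√λ) 0 · φ(t) dt`. The right-hand side is a
continuous function of `1/√λ` whose value at `0` is `∫_b^d φ`.
-/

open MeasureTheory Real Filter

/-- The strip `E(λ)` close to the hypotenuse of the triangle. -/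
def stripE (b d lam : ℝ) : Set (ℝ × ℝ) :=
  {q : ℝ × ℝ | 0 ≤ q.1 ∧ q.1 ≤ 1 - b / Real.sqrt lam ∧
    max 0 (1 - d / Real.sqrt lam - q.1) ≤ q.2 ∧ q.2 ≤ 1 - b / Real.sqrt lam - q.1}

open Set

theorem setIntegral_quadrant_comp_add {h : ℝ → ℝ} (hh : Continuous h) (a c : ℝ) :
    ∫ p in {p : ℝ × ℝ | 0 ≤ p.1 ∧ 0 ≤ p.2 ∧ p.1 + p.2 ∈ Icc a c}, h (p.1 + p.2) =
      ∫ z in Icc a c, max z 0 * h z := by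
  set R : Set (ℝ × ℝ) := {q | q.1 ≤ q.2 ∧ 0 ≤ q.1 ∧ q.2 ∈ Icc a c}
  have hRm : MeasurableSet R := by measurability
  have hshear : (fun p : ℝ × ℝ => (p.2, p.2 + p.1)) ⁻¹' R =
      {p : ℝ × ℝ | 0 ≤ p.1 ∧ 0 ≤ p.2 ∧ p.1 + p.2 ∈ Icc a c} := by
    ext ⟨x, y⟩
    simp only [R, mem_preimage, mem_ofPred_eq, add_comm y x, le_add_iff_nonneg_left]
  have hpres : MeasurePreserving (fun p : ℝ × ℝ => (p.2, p.2 + p.1)) := by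
    simpa only [← Measure.volume_eq_prod] using measurePreserving_prod_add_swap volume volume
  have hchange := hpres.setIntegral_preimage_emb
    (MeasurableEquiv.prodComm.trans (MeasurableEquiv.shearAddRight ℝ)).measurableEmbedding
    (fun q => h q.2) R
  rw [hshear] at hchange
  have hint : Integrable (R.indicator fun q => h q.2) (volume.prod volume) := by
    rw [← Measure.volume_eq_prod, integrable_indicator_iff hRm]
    refine ((hh.comp continuous_snd).continuousOn.integrableOn_compact
      (isCompact_Icc.prod isCompact_Icc)).mono_set (t := Icc 0 c ×ˢ Icc a c) ?_
    rintro ⟨u, z⟩ ⟨hu, hu0, hza, hzc⟩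
    exact ⟨⟨hu0, hu.trans hzc⟩, hza, hzc⟩
  simp only [add_comm] at hchange ⊢
  rw [hchange, ← integral_indicator hRm, Measure.volume_eq_prod, integral_prod_symm _ hint,
    ← integral_indicator measurableSet_Icc]
  congr 1 with z
  by_cases hz : z ∈ Icc a c
  · have hfiber : (fun u => R.indicator (fun q => h q.2) (u, z)) =
        (Icc 0 z).indicator (fun _ => h z) := by
      ext u
      simp only [R, indicator, mem_ofPred_eq, mem_Icc, hz.1, hz.2, and_true, true_and, and_comm]
    simp [hfiber, integral_indicator_const, hz, volume_real_Icc]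
  · simp only [indicator_of_notMem (fun hq : (_, z) ∈ R => hz hq.2.2), integral_zero,
      indicator_of_notMem hz]

theorem stripE_eq (b d lam : ℝ) : stripE b d lam =
    {p | 0 ≤ p.1 ∧ 0 ≤ p.2 ∧ p.1 + p.2 ∈ Icc (1 - d / √lam) (1 - b / √lam)} := by
  ext ⟨x, y⟩
  simp only [stripE, mem_ofPred_eq, mem_Icc, max_le_iff]
  constructor
  · rintro ⟨hx, -, ⟨hy, hd⟩, hb⟩
    exact ⟨hx, hy, by linarith, by linarith⟩
  · rintro ⟨hx, hy, hd, hb⟩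
    exact ⟨hx, by linarith, ⟨hy, by linarith⟩, by linarith⟩

theorem sqrt_mul_integral_stripE {b d lam : ℝ} (hbd : b ≤ d) (hlam : 0 < lam) :
    √lam * ∫ p in stripE b d lam, exp (-(lam * (1 - p.1 - p.2) ^ 2 / 2)) =
      ∫ t in b..d, max (1 - t / √lam) 0 * exp (-(t ^ 2 / 2)) := by
  have hs : 0 < √lam := sqrt_pos.2 hlam
  simp_rw [stripE_eq, sub_sub]
  rw [setIntegral_quadrant_comp_add (h := fun z => exp (-(lam * (1 - z) ^ 2 / 2))) (by fun_prop),
    integral_Icc_eq_integral_Ioc, ← intervalIntegral.integral_of_le (by gcongr),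
    ← intervalIntegral.inv_smul_integral_comp_sub_div, smul_eq_mul, ← mul_assoc,
    mul_inv_cancel₀ hs.ne', one_mul]
  refine intervalIntegral.integral_congr fun t _ => ?_
  simp only [sub_sub_cancel, div_pow, sq_sqrt hlam.le, mul_div_cancel₀ _ hlam.ne']

theorem strip_integral_limit_general (b d : ℝ) (hbd : b < d) :
    Tendsto (fun lam : ℝ =>
        Real.sqrt lam * ∫ p in stripE b d lam, Real.exp (-(lam * (1 - p.1 - p.2) ^ 2 / 2)))
      atTop (nhds (∫ x in b..d, Real.exp (-(x ^ 2 / 2)))) := by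
  have hcont : Continuous fun ε : ℝ => ∫ t in b..d, max (1 - ε * t) 0 * exp (-(t ^ 2 / 2)) := by
    fun_prop
  have hG0 : ∫ t in b..d, max (1 - 0 * t) 0 * exp (-(t ^ 2 / 2)) =
      ∫ x in b..d, exp (-(x ^ 2 / 2)) := by
    simp
  have hlim : Tendsto (fun lam : ℝ => (√lam)⁻¹) atTop (nhds 0) :=
    tendsto_inv_atTop_zero.comp tendsto_sqrt_atTop
  refine (hG0 ▸ (hcont.tendsto 0).comp hlim).congr' ?_
  filter_upwards [eventually_gt_atTop 0] with lam hlam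
  rw [Function.comp_apply, sqrt_mul_integral_stripE hbd.le hlam]
  simp only [div_eq_inv_mul]

/-- asymptotics of the integral of `exp(−λ(1−α₁−α₂)²/2)` over the strip `E(λ)`. -/
theorem strip_integral_limit (b d : ℝ) (hb : 0 ≤ b) (hbd : b < d) :
    Tendsto (fun lam : ℝ =>
        Real.sqrt lam * ∫ p in stripE b d lam, Real.exp (-(lam * (1 - p.1 - p.2) ^ 2 / 2)))
      atTop (nhds (∫ x in b..d, Real.exp (-(x ^ 2 / 2)))) :=
  strip_integral_limit_general b d hbd
end
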